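/- arXiv:1910.08154 — 8 statements merged into one kernel-verified Lean document; each statement's English description precedes it below -/
import Mathlib

section
/- Let M be a real symmetric n×n matrix with spectral decomposition M = Σ_j θ_j E_j, where the E_j are the orthogonal projections onto the eigenspaces of the distinct eigenvalues θ_j. Two unit vectors v and w are strongly cospectral (i.e., for each j there exists a scalar γ_j with |γ_j| = 1 such that E_j v = γ_j E_j w) if and only if they are parallel (for each j the vectors E_j v and E_j w are scalar multiples of one another) and cospectral (for each j, ⟨v, E_j v⟩ = ⟨w, E_j w⟩). -/
open Matrix Finset

lemma myaux {n : ℕ} (A : Matrix (Fin n) (Fin n) ℂ) (hA : Aᴴ = A) (hI : A * A = A)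
    (x : Fin n → ℂ) : star x ⬝ᵥ (A *ᵥ x) = star (A *ᵥ x) ⬝ᵥ (A *ᵥ x) := by
  have h0 : A *ᵥ x = A *ᵥ (A *ᵥ x) := by rw [mulVec_mulVec, hI]
  conv_lhs => rw [h0]
  rw [dotProduct_mulVec]
  have h1 : star x ᵥ* A = star (A *ᵥ x) := by rw [star_mulVec, hA]
  rw [h1]

lemma mysmul {n : ℕ} (c : ℂ) (u : Fin n → ℂ) :
    star (c • u) ⬝ᵥ (c • u) = (starRingEnd ℂ c * c) * (star u ⬝ᵥ u) := by
  simp [star_smul, smul_dotProduct, dotProduct_smul, mul_assoc, smul_eq_mul]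
  ring

lemma mydp0 {n : ℕ} (u : Fin n → ℂ) (h : star u ⬝ᵥ u = 0) : u = 0 := by
  have h2 : star u ⬝ᵥ u = ((∑ i, Complex.normSq (u i) : ℝ) : ℂ) := by
    simp [dotProduct, Complex.star_def, Complex.normSq_eq_conj_mul_self]
  rw [h2] at h
  have h3 : (∑ i, Complex.normSq (u i) : ℝ) = 0 := by exact_mod_cast h
  funext i
  have h4 : Complex.normSq (u i) = 0 := by
    have := Finset.sum_eq_zero_iff_of_nonneg (fun i _ => Complex.normSq_nonneg (u i)) |>.1 h3 i (mem_univ i)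
    exact this
  simpa using Complex.normSq_eq_zero.1 h4

lemma mynorm {c : ℂ} (h : starRingEnd ℂ c * c = 1) : ‖c‖ = 1 := by
  have := congrArg norm h
  rw [norm_mul, RCLike.norm_conj, norm_one] at this
  nlinarith [norm_nonneg c]

/-- Strongly cospectral iff parallel and cospectral, for states of a real symmetric
matrix with spectral decomposition `M = ∑ θ j • E j`. -/
theorem stmt0 {n d : ℕ}
    (θ : Fin d → ℝ) (hθ : Function.Injective θ)
    (E : Fin d → Matrix (Fin n) (Fin n) ℂ)
    (hreal : ∀ j k l, (E j k l).im = 0)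
    (hsymm : ∀ j, (E j)ᵀ = E j)
    (hidem : ∀ j, E j * E j = E j)
    (horth : ∀ j k, j ≠ k → E j * E k = 0)
    (hsum : ∑ j, E j = 1)
    (M : Matrix (Fin n) (Fin n) ℂ)
    (hM : M = ∑ j, (θ j : ℂ) • E j)
    (v w : Fin n → ℂ)
    (hv : star v ⬝ᵥ v = 1) (hw : star w ⬝ᵥ w = 1) :
    (∀ j, ∃ γ : ℂ, ‖γ‖ = 1 ∧ (E j) *ᵥ v = γ • ((E j) *ᵥ w)) ↔
      ((∀ j, ∃ c : ℂ, (E j) *ᵥ v = c • ((E j) *ᵥ w) ∨ (E j) *ᵥ w = c • ((E j) *ᵥ v)) ∧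
       (∀ j, star v ⬝ᵥ ((E j) *ᵥ v) = star w ⬝ᵥ ((E j) *ᵥ w))) := by
  have hEH : ∀ j, (E j)ᴴ = E j := by
    intro j
    ext k l
    rw [conjTranspose_apply]
    have h1 : E j l k = E j k l := by
      have h2 := congrFun (congrFun (hsymm j) l) k
      rw [transpose_apply] at h2
      exact h2.symm
    rw [h1]
    exact (Complex.conj_eq_iff_im).2 (hreal j k l)
  have hs : ∀ j (x : Fin n → ℂ),
      star x ⬝ᵥ (E j *ᵥ x) = star (E j *ᵥ x) ⬝ᵥ (E j *ᵥ x) :=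
    fun j x => myaux (E j) (hEH j) (hidem j) x
  have hnorm1 : ∀ c : ℂ, ‖c‖ = 1 → starRingEnd ℂ c * c = 1 := by
    intro c hc
    rw [Complex.conj_mul', hc]
    norm_num
  constructor
  · intro h
    constructor
    · intro j; obtain ⟨γ, _, hγ⟩ := h j; exact ⟨γ, Or.inl hγ⟩
    · intro j
      obtain ⟨γ, hγ1, hγ⟩ := h j
      rw [hs j v, hs j w, hγ, mysmul, hnorm1 γ hγ1, one_mul]
  · rintro ⟨hpar, hcos⟩ j
    obtain ⟨c, hc | hc⟩ := hpar j
    · have heq : starRingEnd ℂ c * c * (star (E j *ᵥ w) ⬝ᵥ (E j *ᵥ w))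
          = star (E j *ᵥ w) ⬝ᵥ (E j *ᵥ w) := by
        rw [← mysmul, ← hc, ← hs j v, hcos j, hs j w]
      by_cases hb : star (E j *ᵥ w) ⬝ᵥ (E j *ᵥ w) = 0
      · have hw0 : E j *ᵥ w = 0 := mydp0 _ hb
        have hv0 : E j *ᵥ v = 0 := by rw [hc, hw0, smul_zero]
        exact ⟨1, by norm_num, by rw [hv0, hw0, smul_zero]⟩
      · have h1 : starRingEnd ℂ c * c = 1 := by
          refine mul_right_cancel₀ hb ?_
          rw [heq, one_mul]
        exact ⟨c, mynorm h1, hc⟩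
    · have heq : starRingEnd ℂ c * c * (star (E j *ᵥ v) ⬝ᵥ (E j *ᵥ v))
          = star (E j *ᵥ v) ⬝ᵥ (E j *ᵥ v) := by
        rw [← mysmul, ← hc, ← hs j w, ← hcos j, hs j v]
      by_cases ha : star (E j *ᵥ v) ⬝ᵥ (E j *ᵥ v) = 0
      · have hv0 : E j *ᵥ v = 0 := mydp0 _ ha
        have hw0 : E j *ᵥ w = 0 := by rw [hc, hv0, smul_zero]
        exact ⟨1, by norm_num, by rw [hv0, hw0, smul_zero]⟩
      · have h1 : starRingEnd ℂ c * c = 1 := by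
          refine mul_right_cancel₀ ha ?_
          rw [heq, one_mul]
        have hcn : ‖c‖ = 1 := mynorm h1
        have hc0 : c ≠ 0 := by intro h; rw [h, norm_zero] at hcn; norm_num at hcn
        refine ⟨c⁻¹, by rw [norm_inv, hcn]; norm_num, ?_⟩
        rw [hc, smul_smul, inv_mul_cancel₀ hc0, one_smul]
end

section
/- Let M be a real symmetric n×n matrix with spectral decomposition M = Σ_j θ_j E_j and let U(t) = exp(i t M). If unit vectors v and w admit pretty good state transfer, i.e., sup over t ≥ 0 of |⟨w, U(t) v⟩| = 1 (equivalently, for every ε > 0 there is a time t with |⟨w, U(t) v⟩| > 1 − ε), then v and w are strongly cospectral: for each eigenvalue θ_j there exists γ_j with |γ_j| = 1 such that E_j v = γ_j E_j w. -/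
/-!
Write `a_j = ⟪E_j w, E_j v⟫`. Since `U(t) = ∑_j e^{itθ_j} E_j`, the transfer amplitude is
`∑_j e^{itθ_j} a_j`, so pretty good state transfer forces `1 ≤ ∑_j |a_j|`. On the other hand,
Cauchy–Schwarz and AM–GM give `∑_j |a_j| ≤ ∑_j ‖E_j w‖ ‖E_j v‖ ≤ (‖w‖² + ‖v‖²) / 2 = 1`,
since `∑_j ‖E_j x‖² = ‖x‖²` for self-adjoint idempotents `E_j` summing to the identity.
Equality throughout means that for each `j` the vectors `E_j v`, `E_j w` are parallel and of
the same length, i.e. `E_j v = γ_j E_j w` with `|γ_j| = 1`.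
-/

open Matrix Finset

section InnerProductSpace

variable {𝕜 E : Type*} [RCLike 𝕜] [NormedAddCommGroup E] [InnerProductSpace 𝕜 E]

local notation "⟪" x ", " y "⟫" => inner 𝕜 x y

theorem exists_norm_eq_one_smul_of_norm_inner_eq {x y : E}
    (hinner : ‖⟪x, y⟫‖ = ‖x‖ * ‖y‖) (hnorm : ‖x‖ = ‖y‖) :
    ∃ γ : 𝕜, ‖γ‖ = 1 ∧ y = γ • x := by
  rcases eq_or_ne x 0 with rfl | hx
  · refine ⟨1, norm_one, ?_⟩
    rw [smul_zero, ← norm_eq_zero, ← hnorm, norm_zero]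
  have hy : y ≠ 0 := norm_ne_zero_iff.1 (hnorm ▸ norm_ne_zero_iff.2 hx)
  obtain ⟨γ, -, rfl⟩ := (norm_inner_eq_norm_iff hx hy).1 hinner
  refine ⟨γ, ?_, rfl⟩
  rw [norm_smul] at hnorm
  exact (mul_eq_right₀ (norm_ne_zero_iff.2 hx)).1 hnorm.symm

/-- Equality case of `∑ |⟪x_i, y_i⟫| ≤ (∑ ‖x_i‖² + ∑ ‖y_i‖²) / 2`. -/
theorem exists_norm_eq_one_smul_of_one_le_sum_norm_inner {ι : Type*} [Fintype ι] {x y : ι → E}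
    (hx : ∑ i, ‖x i‖ ^ 2 = 1) (hy : ∑ i, ‖y i‖ ^ 2 = 1) (h : 1 ≤ ∑ i, ‖⟪x i, y i⟫‖) (i : ι) :
    ∃ γ : 𝕜, ‖γ‖ = 1 ∧ y i = γ • x i := by
  set defect : ι → ℝ := fun i =>
    (‖x i‖ - ‖y i‖) ^ 2 / 2 + (‖x i‖ * ‖y i‖ - ‖⟪x i, y i⟫‖)
  have hdefect_nonneg : ∀ i, 0 ≤ defect i := fun i =>
    add_nonneg (by positivity) (sub_nonneg.2 (norm_inner_le_norm _ _))
  have hsum : ∑ i, defect i = (∑ i, ‖x i‖ ^ 2 + ∑ i, ‖y i‖ ^ 2) / 2 - ∑ i, ‖⟪x i, y i⟫‖ := by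
    simp only [defect, ← sum_add_distrib, sum_div, ← sum_sub_distrib]
    exact sum_congr rfl fun i _ => by ring
  have hzero : defect i = 0 :=
    (sum_eq_zero_iff_of_nonneg fun i _ => hdefect_nonneg i).1
      (le_antisymm (by linarith) (sum_nonneg fun i _ => hdefect_nonneg i)) i (mem_univ i)
  have hsq := sq_nonneg (‖x i‖ - ‖y i‖)
  have hCS := norm_inner_le_norm (𝕜 := 𝕜) (x i) (y i)
  simp only [defect] at hzero
  refine exists_norm_eq_one_smul_of_norm_inner_eq (by linarith) ?_
  exact sub_eq_zero.1 (pow_eq_zero_iff two_ne_zero |>.1 (by linarith))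

end InnerProductSpace

section Matrix

open WithLp

theorem Matrix.isHermitian_of_im_eq_zero_of_transpose_eq {m : Type*} {A : Matrix m m ℂ}
    (hre : ∀ i j, (A i j).im = 0) (hA : Aᵀ = A) : A.IsHermitian := by
  ext i j
  rw [conjTranspose_apply, ← transpose_apply A i j, hA]
  exact Complex.conj_eq_iff_im.2 (hre i j)

variable {m : Type*} [Fintype m] {𝕜 : Type*} [RCLike 𝕜]

theorem Matrix.IsHermitian.inner_toLp_mulVec_of_mul_self {P : Matrix m m 𝕜} (hP : P.IsHermitian)
    (hidem : P * P = P) (x y : m → 𝕜) :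
    inner 𝕜 (toLp 2 (P *ᵥ x)) (toLp 2 (P *ᵥ y)) = star x ⬝ᵥ (P *ᵥ y) := by
  rw [EuclideanSpace.inner_toLp_toLp, dotProduct_comm, star_mulVec, ← dotProduct_mulVec,
    hP.eq, mulVec_mulVec, hidem]

variable {ι : Type*} [Fintype ι] {E : ι → Matrix m m 𝕜}

theorem sum_norm_sq_toLp_mulVec [DecidableEq m] (hE : ∀ j, (E j).IsHermitian)
    (hidem : ∀ j, E j * E j = E j) (hsum : ∑ j, E j = 1) (x : m → 𝕜) :
    ((∑ j, ‖toLp 2 (E j *ᵥ x)‖ ^ 2 : ℝ) : 𝕜) = star x ⬝ᵥ x := by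
  push_cast
  simp only [← inner_self_eq_norm_sq_to_K, (hE _).inner_toLp_mulVec_of_mul_self (hidem _),
    ← dotProduct_sum, ← sum_mulVec, hsum, one_mulVec]

theorem norm_dotProduct_sum_smul_mulVec_le (hE : ∀ j, (E j).IsHermitian)
    (hidem : ∀ j, E j * E j = E j) {c : ι → 𝕜} (hc : ∀ j, ‖c j‖ = 1) (v w : m → 𝕜) :
    ‖star w ⬝ᵥ ((∑ j, c j • E j) *ᵥ v)‖ ≤
      ∑ j, ‖inner 𝕜 (toLp 2 (E j *ᵥ w)) (toLp 2 (E j *ᵥ v))‖ := by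
  simp only [sum_mulVec, dotProduct_sum, smul_mulVec, dotProduct_smul, smul_eq_mul,
    (hE _).inner_toLp_mulVec_of_mul_self (hidem _)]
  exact (norm_sum_le _ _).trans_eq (sum_congr rfl fun j _ => by rw [norm_mul, hc, one_mul])

end Matrix

theorem stmt1_general {n d : ℕ}
    (θ : Fin d → ℝ)
    (E : Fin d → Matrix (Fin n) (Fin n) ℂ)
    (hreal : ∀ j k l, (E j k l).im = 0)
    (hsymm : ∀ j, (E j)ᵀ = E j)
    (hidem : ∀ j, E j * E j = E j)
    (hsum : ∑ j, E j = 1)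
    (v w : Fin n → ℂ)
    (hv : star v ⬝ᵥ v = 1) (hw : star w ⬝ᵥ w = 1)
    (hpgst : ∀ ε > (0 : ℝ), ∃ t : ℝ, 0 ≤ t ∧
      ‖star w ⬝ᵥ ((∑ j, Complex.exp (Complex.I * ((t * θ j : ℝ) : ℂ)) • E j) *ᵥ v)‖ > 1 - ε) :
    ∀ j, ∃ γ : ℂ, ‖γ‖ = 1 ∧ (E j) *ᵥ v = γ • ((E j) *ᵥ w) := by
  have hE j := isHermitian_of_im_eq_zero_of_transpose_eq (hreal j) (hsymm j)
  have hunit (x : Fin n → ℂ) (hx : star x ⬝ᵥ x = 1) :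
      ∑ j, ‖WithLp.toLp 2 (E j *ᵥ x)‖ ^ 2 = 1 :=
    Complex.ofReal_eq_one.1 ((sum_norm_sq_toLp_mulVec hE hidem hsum x).trans hx)
  have hoverlap : 1 ≤ ∑ j, ‖inner ℂ (WithLp.toLp 2 (E j *ᵥ w)) (WithLp.toLp 2 (E j *ᵥ v))‖ :=
    le_of_forall_pos_lt_add fun ε hε => by
      obtain ⟨t, -, ht⟩ := hpgst ε hε
      linarith [norm_dotProduct_sum_smul_mulVec_le hE hidem
        (fun j => Complex.norm_exp_I_mul_ofReal (t * θ j)) v w]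
  intro j
  obtain ⟨γ, hγ, hparallel⟩ :=
    exists_norm_eq_one_smul_of_one_le_sum_norm_inner (hunit w hw) (hunit v hv) hoverlap j
  exact ⟨γ, hγ, WithLp.toLp_injective 2 hparallel⟩

/-- Pretty good state transfer between unit states `v`, `w` implies strong cospectrality. -/
theorem stmt1 {n d : ℕ}
    (θ : Fin d → ℝ) (hθ : Function.Injective θ)
    (E : Fin d → Matrix (Fin n) (Fin n) ℂ)
    (hreal : ∀ j k l, (E j k l).im = 0)
    (hsymm : ∀ j, (E j)ᵀ = E j)
    (hidem : ∀ j, E j * E j = E j)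
    (horth : ∀ j k, j ≠ k → E j * E k = 0)
    (hsum : ∑ j, E j = 1)
    (M : Matrix (Fin n) (Fin n) ℂ)
    (hM : M = ∑ j, (θ j : ℂ) • E j)
    (v w : Fin n → ℂ)
    (hv : star v ⬝ᵥ v = 1) (hw : star w ⬝ᵥ w = 1)
    (hpgst : ∀ ε > (0 : ℝ), ∃ t : ℝ, 0 ≤ t ∧
      ‖star w ⬝ᵥ ((∑ j, Complex.exp (Complex.I * ((t * θ j : ℝ) : ℂ)) • E j) *ᵥ v)‖ > 1 - ε) :
    ∀ j, ∃ γ : ℂ, ‖γ‖ = 1 ∧ (E j) *ᵥ v = γ • ((E j) *ᵥ w) :=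
  stmt1_general θ E hreal hsymm hidem hsum v w hv hw hpgst
end

section
/- Let m = 2^t p^s with p an odd prime and s ≥ 1, t ≥ 0 integers, and let θ_j = 2 cos(jπ/m) for 1 ≤ j < m. Suppose integers ℓ_1, …, ℓ_{m−1} satisfy Σ_{j=1}^{m−1} ℓ_j θ_j = 0. Then for every j with 1 ≤ j ≤ m − m/p, writing j = q(m/p) + r with 0 ≤ r < m/p, one has ℓ_j = ℓ_{m−j} + (−1)^q (ℓ_{m − m/p + r} − ℓ_{m/p − r}) if r ≠ 0, and ℓ_j = ℓ_{m−j} if r = 0. -/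
/-!
With `ζ = exp (π i / m)` the relation says that `ζ` is a root of
`P = ∑ ℓ_j (X ^ j + X ^ (2m - j)) ∈ ℚ[X]`, so the cyclotomic polynomial `Φ_{2m}` divides `P`.
For `m = d p` with `d = m / p = 2^t p^(s-1)`, `Φ_{2m}` divides the monic quotient
`(X ^ m + 1) / (X ^ d + 1) = ∑_{i<p} (-X ^ d) ^ i`, which has the same degree
`φ(2m) = m - d`; hence `(X ^ d + 1) P = (X ^ m + 1) Q` with `deg Q < m + d`.
Comparing the coefficients of `X ^ k` and `X ^ (k + m)` shows that `c_k = P_k - P_(k+m)`,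
which is `ℓ_k - ℓ_(m-k)` for `0 < k < m` and `0` for `k = 0`, satisfies `c_k = -c_(k-d)`
for `d ≤ k < m`. Hence `c_(qd+r) = (-1)^q c_r`, and `c_(m-d+r) = c_r` because `p - 1` is even.
-/

open Finset Polynomial Complex

lemma monic_X_pow_add_one {R : Type*} [Semiring R] {n : ℕ} (hn : n ≠ 0) :
    (X ^ n + 1 : R[X]).Monic := by
  simpa using monic_X_pow_add_C (1 : R) hn

lemma natDegree_X_pow_add_one {R : Type*} [Semiring R] [Nontrivial R] (n : ℕ) :
    (X ^ n + 1 : R[X]).natDegree = n := by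
  simpa using natDegree_X_pow_add_C (n := n) (r := (1 : R))

lemma geom_sum_neg_X_pow_mul_X_pow_add_one {R : Type*} [CommRing R] {p : ℕ} (hp : Odd p)
    (d : ℕ) : (∑ i ∈ range p, (-X ^ d : R[X]) ^ i) * (X ^ d + 1) = X ^ (d * p) + 1 := by
  have h := geom_sum_mul (-X ^ d : R[X]) p
  rw [hp.neg_pow, ← pow_mul] at h
  linear_combination -h

lemma aeval_geom_sum_neg_X_pow_eq_zero {K : Type*} [CommRing K] [IsDomain K] [Algebra ℚ K]
    {d p : ℕ} (hp : Odd p) (hp1 : 1 < p) (hd : 0 < d) {ζ : K}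
    (hζ : IsPrimitiveRoot ζ (2 * (d * p))) :
    aeval ζ (∑ i ∈ range p, (-X ^ d : ℚ[X]) ^ i) = 0 := by
  -- `ζ ^ d ≠ -1` because `ζ` has order `2 * d * p > 2 * d`.
  have hζd : ζ ^ d + 1 ≠ 0 := fun h => hζ.pow_ne_one_of_pos_of_lt (l := 2 * d) (by omega)
    (by nlinarith) (by rw [mul_comm, pow_mul, eq_neg_of_add_eq_zero_left h]; norm_num)
  have hζm : ζ ^ (d * p) = -1 :=
    (hζ.pow (by positivity) (mul_comm 2 (d * p))).eq_neg_one_of_two_right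
  have h := congrArg (aeval ζ) (geom_sum_neg_X_pow_mul_X_pow_add_one (R := ℚ) hp d)
  simp only [map_mul, map_add, map_pow, map_one, aeval_X, hζm, neg_add_cancel] at h
  exact (mul_eq_zero.mp h).resolve_right hζd

lemma cyclotomic_two_mul_mul_X_pow_add_one {d p : ℕ} (hp : Odd p) (hp1 : 1 < p) (hd : 0 < d)
    (htot : Nat.totient (2 * (d * p)) = d * (p - 1)) :
    cyclotomic (2 * (d * p)) ℚ * (X ^ d + 1) = X ^ (d * p) + 1 := by
  have hΦ := geom_sum_neg_X_pow_mul_X_pow_add_one (R := ℚ) hp d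
  set Φ : ℚ[X] := ∑ i ∈ range p, (-X ^ d) ^ i
  have hΦmonic : Φ.Monic :=
    (monic_X_pow_add_one hd.ne').of_mul_monic_right (hΦ ▸ monic_X_pow_add_one (by positivity))
  have hΦdeg : Φ.natDegree = d * (p - 1) := by
    have h := congrArg natDegree hΦ
    rw [hΦmonic.natDegree_mul (monic_X_pow_add_one hd.ne'), natDegree_X_pow_add_one,
      natDegree_X_pow_add_one] at h
    rw [Nat.mul_sub_one]
    omega
  have hprim := isPrimitiveRoot_exp (2 * (d * p)) (by positivity)
  have hdvd : cyclotomic (2 * (d * p)) ℚ ∣ Φ := by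
    rw [cyclotomic_eq_minpoly_rat hprim (by positivity)]
    exact minpoly.dvd ℚ _ (aeval_geom_sum_neg_X_pow_eq_zero hp hp1 hd hprim)
  rw [← eq_of_monic_of_dvd_of_natDegree_le (cyclotomic.monic _ ℚ) hΦmonic hdvd
    (by rw [natDegree_cyclotomic, htot, hΦdeg]), hΦ]

lemma totient_two_mul_two_pow_mul_prime_pow {p : ℕ} (hp : p.Prime) (hp2 : p ≠ 2) (t s : ℕ) :
    Nat.totient (2 * (2 ^ t * p ^ s * p)) = 2 ^ t * p ^ s * (p - 1) := by
  have hco : Nat.Coprime (2 ^ (t + 1)) (p ^ (s + 1)) :=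
    Nat.Coprime.pow _ _ ((Nat.coprime_primes Nat.prime_two hp).mpr hp2.symm)
  rw [show 2 * (2 ^ t * p ^ s * p) = 2 ^ (t + 1) * p ^ (s + 1) by ring, Nat.totient_mul hco,
    Nat.totient_prime_pow_succ Nat.prime_two, Nat.totient_prime_pow_succ hp]
  ring

lemma coeff_sub_coeff_add_eq_neg {R : Type*} [CommRing R] [Nontrivial R] {d m k : ℕ} {P Q : R[X]}
    (hPQ : (X ^ d + 1) * P = (X ^ m + 1) * Q) (hP : P.natDegree < 2 * m) (hdk : d ≤ k)
    (hkm : k < m) :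
    P.coeff k - P.coeff (k + m) = -(P.coeff (k - d) - P.coeff (k - d + m)) := by
  have hQ : Q.coeff (k + m) = 0 := by
    rcases eq_or_ne Q 0 with rfl | hQ0
    · simp
    refine coeff_eq_zero_of_natDegree_lt ?_
    have h := natDegree_mul_le (p := X ^ d + 1) (q := P)
    rw [hPQ, (monic_X_pow_add_one (by omega)).natDegree_mul' hQ0, natDegree_X_pow_add_one,
      natDegree_X_pow_add_one] at h
    omega
  have hk := congrArg (coeff · k) hPQ
  have hkm' := congrArg (coeff · (k + m)) hPQ
  simp only [add_mul, one_mul, coeff_add, coeff_X_pow_mul'] at hk hkm'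
  rw [if_pos hdk, if_neg (by omega)] at hk
  rw [if_pos (by omega), if_pos (by omega), hQ, Nat.add_sub_cancel, Nat.sub_add_comm hdk] at hkm'
  linear_combination hk - hkm'

lemma eq_neg_one_pow_mul_of_forall_eq_neg {R : Type*} [Ring R] {d m : ℕ} {G : ℕ → R}
    (hG : ∀ k, d ≤ k → k < m → G k = -G (k - d)) (q r : ℕ) (h : q * d + r < m) :
    G (q * d + r) = (-1) ^ q * G r := by
  induction q with
  | zero => simp
  | succ q ih =>
    have hqd : (q + 1) * d + r - d = q * d + r := by rw [Nat.succ_mul]; omega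
    rw [hG _ (by rw [Nat.succ_mul]; omega) h, hqd, ih (by rw [Nat.succ_mul] at h; omega), pow_succ]
    noncomm_ring

lemma two_cos_eq_pow_add_pow {m n : ℕ} (hm : 0 < m) (hn : n ≤ 2 * m) :
    ((2 * Real.cos (n * Real.pi / m) : ℝ) : ℂ) =
      exp (2 * Real.pi * I / (2 * m : ℕ)) ^ n +
        exp (2 * Real.pi * I / (2 * m : ℕ)) ^ (2 * m - n) := by
  have hprim := isPrimitiveRoot_exp (2 * m) (by omega)
  have hinv : exp (2 * Real.pi * I / (2 * m : ℕ)) ^ (2 * m - n) =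
      (exp (2 * Real.pi * I / (2 * m : ℕ)) ^ n)⁻¹ :=
    eq_inv_of_mul_eq_one_left (by rw [← pow_add, Nat.sub_add_cancel hn, hprim.pow_eq_one])
  have hpow : exp (2 * Real.pi * I / (2 * m : ℕ)) ^ n = exp ((n * Real.pi / m : ℝ) * I) := by
    rw [← exp_nat_mul]
    congr 1
    push_cast
    field_simp
  rw [hinv, hpow, ← exp_neg, ← neg_mul, ofReal_mul, ofReal_cos, ofReal_ofNat, two_cos]

noncomputable def cosPoly (m : ℕ) (ℓ : ℕ → ℤ) : ℚ[X] :=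
  ∑ j ∈ Ico 1 m, C (ℓ j : ℚ) * (X ^ j + X ^ (2 * m - j))

lemma aeval_cosPoly {m : ℕ} (hm : 0 < m) (ℓ : ℕ → ℤ) :
    aeval (exp (2 * Real.pi * I / (2 * m : ℕ))) (cosPoly m ℓ) =
      ((∑ j ∈ Ico 1 m, (ℓ j : ℝ) * (2 * Real.cos (j * Real.pi / m)) : ℝ) : ℂ) := by
  simp only [cosPoly, map_sum, map_mul, map_add, map_pow, aeval_X, aeval_C, ofReal_sum]
  refine sum_congr rfl fun j hj => ?_
  rw [ofReal_mul, two_cos_eq_pow_add_pow hm (by simp at hj; omega), eq_ratCast (algebraMap ℚ ℂ)]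
  push_cast
  rfl

lemma cyclotomic_dvd_cosPoly {m : ℕ} (hm : 0 < m) (ℓ : ℕ → ℤ)
    (hrel : ∑ j ∈ Ico 1 m, (ℓ j : ℝ) * (2 * Real.cos (j * Real.pi / m)) = 0) :
    cyclotomic (2 * m) ℚ ∣ cosPoly m ℓ := by
  have hprim := isPrimitiveRoot_exp (2 * m) (by omega)
  rw [cyclotomic_eq_minpoly_rat hprim (by omega)]
  exact minpoly.dvd ℚ _ (by rw [aeval_cosPoly hm, hrel, ofReal_zero])

lemma coeff_cosPoly (m : ℕ) (ℓ : ℕ → ℤ) (n : ℕ) :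
    (cosPoly m ℓ).coeff n =
      (if n ∈ Ico 1 m then (ℓ n : ℚ) else 0) +
        if 2 * m - n ∈ Ico 1 m then (ℓ (2 * m - n) : ℚ) else 0 := by
  have h : ∀ j ∈ Ico 1 m, (n = 2 * m - j ↔ j = 2 * m - n) := fun j hj => by simp at hj; omega
  simp only [cosPoly, finsetSum_coeff, coeff_C_mul, coeff_add, coeff_X_pow, mul_add, mul_ite,
    mul_one, mul_zero, sum_add_distrib]
  rw [sum_ite_eq, ← sum_ite_eq' (Ico 1 m) (2 * m - n) (fun j => (ℓ j : ℚ))]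
  exact congrArg₂ _ rfl (sum_congr rfl fun j hj => by rw [if_congr (h j hj) rfl rfl])

lemma natDegree_cosPoly_lt {m : ℕ} (hm : 0 < m) (ℓ : ℕ → ℤ) :
    (cosPoly m ℓ).natDegree < 2 * m := by
  refine Nat.lt_of_le_sub_one (by omega) (natDegree_sum_le_of_forall_le _ _ fun j hj => ?_)
  simp only [mem_Ico] at hj
  refine (natDegree_C_mul_le _ _).trans ((natDegree_add_le _ _).trans ?_)
  simp only [natDegree_X_pow]
  omega

def reflectDiff (m : ℕ) (ℓ : ℕ → ℤ) (n : ℕ) : ℤ :=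
  if n = 0 then 0 else ℓ n - ℓ (m - n)

lemma coeff_sub_coeff_add_cosPoly {m n : ℕ} (ℓ : ℕ → ℤ) (hn : n < m) :
    (cosPoly m ℓ).coeff n - (cosPoly m ℓ).coeff (n + m) = reflectDiff m ℓ n := by
  rw [coeff_cosPoly, coeff_cosPoly, reflectDiff]
  rcases Nat.eq_zero_or_pos n with rfl | hn0
  · simp only [mem_Ico]
    rw [if_neg (by omega), if_neg (by omega), if_neg (by omega), if_neg (by omega)]
    simp
  · simp only [mem_Ico, show 2 * m - (n + m) = m - n by omega]
    rw [if_pos ⟨hn0, hn⟩, if_neg (by omega), if_neg (by omega), if_pos (by omega),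
      if_neg hn0.ne']
    push_cast
    ring

lemma reflectDiff_eq_neg {d p m : ℕ} (hp : Odd p) (hp1 : 1 < p) (hd : 0 < d)
    (hmd : m = d * p) (htot : Nat.totient (2 * m) = d * (p - 1)) {ℓ : ℕ → ℤ}
    (hrel : ∑ j ∈ Ico 1 m, (ℓ j : ℝ) * (2 * Real.cos (j * Real.pi / m)) = 0) {k : ℕ}
    (hdk : d ≤ k) (hkm : k < m) :
    reflectDiff m ℓ k = -reflectDiff m ℓ (k - d) := by
  have hm : 0 < m := by omega
  obtain ⟨Q, hQ⟩ := cyclotomic_dvd_cosPoly hm ℓ hrel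
  have hPQ : (X ^ d + 1) * cosPoly m ℓ = (X ^ m + 1) * Q := by
    rw [hQ, hmd, ← cyclotomic_two_mul_mul_X_pow_add_one hp hp1 hd (hmd ▸ htot)]
    ring
  have h := coeff_sub_coeff_add_eq_neg hPQ (natDegree_cosPoly_lt hm ℓ) hdk hkm
  rw [coeff_sub_coeff_add_cosPoly ℓ hkm, coeff_sub_coeff_add_cosPoly ℓ (by omega)] at h
  exact_mod_cast h

/-- Integer relations among the eigenvalues `θ_j = 2cos(jπ/m)` for `m = 2^t p^s`. -/
theorem stmt7 (p s t m : ℕ) (hp : Nat.Prime p) (hodd : Odd p) (hs : 1 ≤ s)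
    (hm : m = 2 ^ t * p ^ s) (ℓ : ℕ → ℤ)
    (hrel : ∑ j ∈ Finset.Ico 1 m, (ℓ j : ℝ) * (2 * Real.cos (j * Real.pi / m)) = 0)
    (j q r : ℕ) (hj1 : 1 ≤ j) (hj2 : j ≤ m - m / p)
    (hqr : j = q * (m / p) + r) (hr : r < m / p) :
    (r ≠ 0 → ℓ j = ℓ (m - j) + (-1) ^ q * (ℓ (m - m / p + r) - ℓ (m / p - r))) ∧
    (r = 0 → ℓ j = ℓ (m - j)) := by
  obtain ⟨s, rfl⟩ : ∃ s', s = s' + 1 := ⟨s - 1, by omega⟩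
  obtain ⟨d, hd⟩ : ∃ d, d = 2 ^ t * p ^ s := ⟨_, rfl⟩
  have hmd : m = d * p := by rw [hm, hd]; ring
  have hd0 : 0 < d := by rw [hd]; exact Nat.mul_pos (by positivity) (pow_pos hp.pos _)
  have hdiv : m / p = d := by rw [hmd, Nat.mul_div_cancel _ hp.pos]
  rw [hdiv] at hj2 hqr hr ⊢
  have htot : Nat.totient (2 * m) = d * (p - 1) := by
    rw [hmd, hd]
    exact totient_two_mul_two_pow_mul_prime_pow hp (hodd.ne_two_of_dvd_nat dvd_rfl) t s
  have hG := eq_neg_one_pow_mul_of_forall_eq_neg fun k hdk hkm =>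
    reflectDiff_eq_neg hodd hp.one_lt hd0 hmd htot hrel hdk hkm
  have hGj : reflectDiff m ℓ j = (-1) ^ q * reflectDiff m ℓ r := hqr ▸ hG q r (by omega)
  have hGtop : reflectDiff m ℓ (m - d + r) = reflectDiff m ℓ r := by
    have hpd : m - d = (p - 1) * d := by rw [hmd, Nat.sub_one_mul, mul_comm]
    rw [hpd, hG _ _ (by omega), (Nat.Odd.sub_odd hodd odd_one).neg_one_pow, one_mul]
  constructor
  · intro hr0
    have h := hGtop ▸ hGj
    simp only [reflectDiff, if_neg (by omega : j ≠ 0), if_neg (by omega : m - d + r ≠ 0),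
      show m - (m - d + r) = d - r by omega] at h
    linear_combination h
  · rintro rfl
    simp only [reflectDiff, if_neg (show j ≠ 0 by omega), ↓reduceIte, mul_zero] at hGj
    linear_combination hGj
end

section
/- Let v = Σ_x β_x |x⟩ be a parity state of the path P_n, i.e., β_x = 0 for all even x, or β_x = 0 for all odd x. Then for each 1 ≤ j ≤ n, the eigenvalue θ_j = 2cos(jπ/(n+1)) lies in the eigenvalue support of v (meaning E_j v ≠ 0) if and only if θ_{n+1−j} also lies in the eigenvalue support of v. (Equivalently: E_j v = 0 implies E_{n+1−j} v = 0.) -/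
open Matrix Real

lemma sin_rev_aux (m : ℕ) (x : ℝ) :
    Real.sin ((m + 1) * Real.pi - x) = (-1) ^ m * Real.sin x := by
  rw [Real.sin_sub]
  have h1 : Real.sin ((m + 1 : ℝ) * Real.pi) = 0 := by
    have := Real.sin_nat_mul_pi (m + 1)
    push_cast at this ⊢; linarith
  have h2 : Real.cos ((m + 1 : ℝ) * Real.pi) = (-1) ^ (m + 1) := by
    have := Real.cos_nat_mul_pi_sub 0 (m + 1)
    push_cast at this ⊢
    simpa using this
  rw [h1, h2]
  ring

/-- For a parity state `v` of the path `P_n`, `θ_j` is in the eigenvalue support of `v`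
iff `θ_{n+1−j}` is. -/
theorem stmt9 (n : ℕ)
    (E : Fin n → Matrix (Fin n) (Fin n) ℝ)
    (hE : ∀ (j : Fin n) (k l : Fin n), E j k l =
      (2 / (n + 1)) * Real.sin ((k.1 + 1) * (j.1 + 1) * Real.pi / (n + 1)) *
        Real.sin ((l.1 + 1) * (j.1 + 1) * Real.pi / (n + 1)))
    (v : Fin n → ℝ)
    (hpar : (∀ x : Fin n, Even (x.1 + 1) → v x = 0) ∨ (∀ x : Fin n, Odd (x.1 + 1) → v x = 0)) :
    ∀ j : Fin n, (E j) *ᵥ v ≠ 0 ↔ (E j.rev) *ᵥ v ≠ 0 := by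
  -- extract a sign ε with (-1)^l * v l = ε * v l
  obtain ⟨ε, hε, hεv⟩ : ∃ ε : ℝ, ε ≠ 0 ∧ ∀ l : Fin n, (-1 : ℝ) ^ l.1 * v l = ε * v l := by
    rcases hpar with h | h
    · refine ⟨1, one_ne_zero, fun l => ?_⟩
      rcases Nat.even_or_odd l.1 with he | ho
      · rw [he.neg_one_pow]
      · rw [h l (by simpa using ho.add_one), mul_zero, mul_zero]
    · refine ⟨-1, by norm_num, fun l => ?_⟩
      rcases Nat.even_or_odd l.1 with he | ho
      · rw [h l (by simpa using he.add_one), mul_zero, mul_zero]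
      · rw [ho.neg_one_pow]
  -- sine relation between j and j.rev entries
  have hsin : ∀ (j : Fin n) (k : Fin n),
      Real.sin ((k.1 + 1) * (j.rev.1 + 1) * Real.pi / (n + 1)) =
        (-1) ^ k.1 * Real.sin ((k.1 + 1) * (j.1 + 1) * Real.pi / (n + 1)) := by
    intro j k
    have hj : (j.rev.1 : ℝ) + 1 = (n : ℝ) - j.1 := by
      have h1 : j.1 + 1 ≤ n := j.2
      have : j.rev.1 = n - (j.1 + 1) := rfl
      rw [this]
      have := Nat.cast_sub h1 (R := ℝ)
      push_cast [this]; ring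
    rw [hj]
    have hne : (n : ℝ) + 1 ≠ 0 := by positivity
    have harg : ((k.1 : ℝ) + 1) * ((n : ℝ) - j.1) * Real.pi / (n + 1) =
        ((k.1 : ℝ) + 1) * Real.pi - (k.1 + 1) * (j.1 + 1) * Real.pi / (n + 1) := by
      field_simp
      ring
    rw [harg, sin_rev_aux]
  -- entrywise relation for the mulVec
  have key : ∀ (j : Fin n) (k : Fin n),
      ((E j.rev) *ᵥ v) k = (-1) ^ k.1 * ε * (((E j) *ᵥ v) k) := by
    intro j k
    simp only [mulVec, dotProduct]
    rw [Finset.mul_sum]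
    apply Finset.sum_congr rfl
    intro l _
    rw [hE j.rev k l, hE j k l, hsin j k, hsin j l]
    linear_combination (2 / ((n : ℝ) + 1) * (-1) ^ (k.1 : ℕ) *
      Real.sin ((k.1 + 1) * (j.1 + 1) * Real.pi / (n + 1)) *
      Real.sin ((l.1 + 1) * (j.1 + 1) * Real.pi / (n + 1))) * hεv l
  have zero_iff : ∀ j : Fin n, (E j.rev) *ᵥ v = 0 ↔ (E j) *ᵥ v = 0 := by
    intro j
    constructor
    · intro h
      funext k
      have hk := congrFun h k
      rw [key j k] at hk
      simp only [Pi.zero_apply] at hk ⊢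
      have hne : ((-1 : ℝ) ^ k.1 * ε) ≠ 0 :=
        mul_ne_zero (pow_ne_zero _ (by norm_num)) hε
      exact (mul_eq_zero.mp hk).resolve_left hne
    · intro h
      funext k
      rw [key j k, congrFun h k]
      simp
  intro j
  constructor
  · intro h hc
    exact h ((zero_iff j).mp hc)
  · intro h hc
    apply h
    have h2 : (E j.rev.rev) *ᵥ v = 0 := by rw [Fin.rev_rev]; exact hc
    exact (zero_iff j.rev).mp h2
end

section
/- Let θ_1, …, θ_d and ζ_1, …, ζ_d be real numbers. Then for every ε > 0 the system |θ_r y − ζ_r| < ε (mod 2π), r = 1, …, d, has a real solution y if and only if for all integers ℓ_1, …, ℓ_d with ℓ_1θ_1 + ⋯ + ℓ_dθ_d = 0 one has ℓ_1ζ_1 + ⋯ + ℓ_dζ_d ≡ 0 (mod 2π). -/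
open Finset

lemma count_sum (m k : ℕ) (γ : Fin m → ℝ) (f : Fin k → Fin m) :
    (∑ t, γ (f t)) = ∑ j : Fin m, ((univ.filter fun t => f t = j).card : ℝ) * γ j := by
  rw [← Finset.sum_fiberwise univ f (fun t => γ (f t))]
  refine Finset.sum_congr rfl fun j _ => ?_
  rw [Finset.sum_congr rfl (fun t ht => by rw [(Finset.mem_filter.1 ht).2] :
      ∀ t ∈ univ.filter fun t => f t = j, γ (f t) = γ j),
    Finset.sum_const, nsmul_eq_mul]

lemma expand_pow (m k : ℕ) (α β : Fin m → ℝ) (y : ℝ) :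
    (∑ j : Fin m, Complex.exp (Complex.I * (α j * y - β j))) ^ k
      = ∑ f : Fin k → Fin m,
          Complex.exp (Complex.I * ((∑ t, α (f t)) * y - ∑ t, β (f t))) := by
  have : (∑ j : Fin m, Complex.exp (Complex.I * (α j * y - β j))) ^ k
      = ∏ _t : Fin k, ∑ j : Fin m, Complex.exp (Complex.I * (α j * y - β j)) := by
    rw [Finset.prod_const, Finset.card_univ, Fintype.card_fin]
  rw [this, Finset.prod_univ_sum, Fintype.piFinset_univ]
  refine Finset.sum_congr rfl fun f _ => ?_
  rw [← Complex.exp_sum]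
  congr 1
  push_cast
  rw [Finset.sum_mul, ← Finset.sum_sub_distrib, Finset.mul_sum]

lemma kron_core (m k : ℕ) (α β : Fin m → ℝ)
    (hcol : ∀ f g : Fin k → Fin m, (∑ t, α (f t)) = (∑ t, α (g t)) →
      ∃ K : ℤ, (∑ t, β (f t)) - (∑ t, β (g t)) = 2 * Real.pi * K)
    (b : ℝ) (hb : 0 ≤ b)
    (hbk : b ^ k * ((k : ℝ) + 1) ^ m < (m : ℝ) ^ k) :
    ∃ y : ℝ, b < ‖∑ j : Fin m, Complex.exp (Complex.I * (α j * y - β j))‖ := by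
  by_contra hcon
  push_neg at hcon
  set F : ℝ → ℂ := fun y => ∑ j : Fin m, Complex.exp (Complex.I * (α j * y - β j)) with hF
  set S : (Fin k → Fin m) → ℝ := fun f => ∑ t, α (f t) with hSdef
  set B : (Fin k → Fin m) → ℝ := fun f => ∑ t, β (f t) with hBdef
  -- counting map
  have hcard : ∀ (f : Fin k → Fin m) (j : Fin m),
      (univ.filter fun t => f t = j).card < k + 1 :=
    fun f j => Nat.lt_succ_of_le ((Finset.card_filter_le _ _).trans_eq (by simp))
  set c : (Fin k → Fin m) → (Fin m → Fin (k + 1)) :=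
    fun f j => ⟨_, hcard f j⟩ with hc
  -- max fiber
  obtain ⟨v, -, hv⟩ := Finset.exists_max_image (univ : Finset (Fin m → Fin (k + 1)))
    (fun w => (univ.filter fun f => c f = w).card) univ_nonempty
  have hsum : (m : ℕ) ^ k = ∑ w : Fin m → Fin (k + 1), (univ.filter fun f => c f = w).card := by
    have := Finset.card_eq_sum_card_fiberwise
      (f := c) (s := (univ : Finset (Fin k → Fin m))) (t := univ) (fun x _ => mem_univ _)
    simpa [Finset.card_univ] using this
  have hMb : (m : ℝ) ^ k ≤ ((k : ℝ) + 1) ^ m * ((univ.filter fun f => c f = v).card : ℝ) := by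
    have h1 : (m : ℕ) ^ k ≤ (k + 1) ^ m * (univ.filter fun f => c f = v).card := by
      rw [hsum]
      calc ∑ w : Fin m → Fin (k + 1), (univ.filter fun f => c f = w).card
          ≤ ∑ _w : Fin m → Fin (k + 1), (univ.filter fun f => c f = v).card :=
            Finset.sum_le_sum fun w _ => hv w (mem_univ _)
        _ = (k + 1) ^ m * (univ.filter fun f => c f = v).card := by
            simp [Finset.sum_const, Finset.card_univ, mul_comm]
    exact_mod_cast h1
  have hMgt : b ^ k < ((univ.filter fun f => c f = v).card : ℝ) := by
    by_contra hle
    push_neg at hle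
    have : ((k : ℝ) + 1) ^ m * ((univ.filter fun f => c f = v).card : ℝ)
        ≤ b ^ k * ((k : ℝ) + 1) ^ m := by
      rw [mul_comm (b ^ k)]
      exact mul_le_mul_of_nonneg_left hle (by positivity)
    linarith [hMb]
  have hpos : 0 < (univ.filter fun f => c f = v).card :=
    Nat.cast_pos.mp (lt_of_le_of_lt (pow_nonneg hb k) hMgt)
  obtain ⟨f₀, hf₀⟩ := Finset.card_pos.mp hpos
  set lam : ℝ := S f₀ with hlam
  set Mset : Finset (Fin k → Fin m) := univ.filter fun f => S f = lam with hMset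
  -- the c-fiber is inside Mset
  have hsub : (univ.filter fun f => c f = v) ⊆ Mset := by
    intro f hf
    have hcf : c f = c f₀ := by
      rw [(Finset.mem_filter.1 hf).2, (Finset.mem_filter.1 hf₀).2]
    refine Finset.mem_filter.2 ⟨mem_univ _, ?_⟩
    have : ∀ j, (univ.filter fun t => f t = j).card = (univ.filter fun t => f₀ t = j).card := by
      intro j
      have := congrFun hcf j
      simpa [hc, Fin.ext_iff] using this
    rw [hlam, hSdef]
    simp only
    rw [count_sum, count_sum]
    exact Finset.sum_congr rfl fun j _ => by rw [this j]
  have hN : b ^ k < (Mset.card : ℝ) :=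
    lt_of_lt_of_le hMgt (by exact_mod_cast Finset.card_le_card hsub)
  -- phases on Mset all equal
  set u : ℂ := Complex.exp (-(Complex.I * B f₀)) with hu
  have huabs : ‖u‖ = 1 := by
    rw [hu, Complex.norm_exp]
    simp
  have huf : ∀ f ∈ Mset, Complex.exp (-(Complex.I * B f)) = u := by
    intro f hf
    obtain ⟨K, hK⟩ := hcol f f₀ ((Finset.mem_filter.1 hf).2)
    have harg : -(Complex.I * B f) = -(Complex.I * B f₀) + (-K : ℤ) * (2 * Real.pi * Complex.I) := by
      have hr : B f = B f₀ + 2 * Real.pi * K := by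
        have : B f - B f₀ = 2 * Real.pi * K := hK
        linarith
      have : (B f : ℂ) = (B f₀ : ℂ) + 2 * Real.pi * K := by
        rw [hr]; push_cast; ring
      rw [this]
      push_cast
      ring
    rw [harg, Complex.exp_add, hu]
    have : ((-K : ℤ) : ℂ) * (2 * Real.pi * Complex.I) = (-K : ℤ) * (2 * Real.pi * Complex.I) := rfl
    rw [Complex.exp_int_mul_two_pi_mul_I (-K), mul_one]
  -- error constant
  set offS : Finset (Fin k → Fin m) := univ.filter fun f => ¬ S f = lam with hoff
  set C : ℝ := ∑ f ∈ offS, 2 / |S f - lam| with hC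
  have hC0 : 0 ≤ C := Finset.sum_nonneg fun f _ => by positivity
  have key : ∀ T : ℝ, 0 < T → (Mset.card : ℝ) * T - C ≤ b ^ k * T := by
    intro T hT
    have hg : ∀ y : ℝ, F y ^ k * Complex.exp (-(Complex.I * (lam : ℝ) * y)) =
        ∑ f : Fin k → Fin m, Complex.exp (-(Complex.I * (B f : ℝ))) *
          Complex.exp ((Complex.I * ((S f - lam : ℝ) : ℂ)) * y) := by
      intro y
      rw [show F y ^ k = ∑ f : Fin k → Fin m,
          Complex.exp (Complex.I * ((S f : ℝ) * y - (B f : ℝ))) from expand_pow m k α β y,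
        Finset.sum_mul]
      refine Finset.sum_congr rfl fun f _ => ?_
      rw [← Complex.exp_add, ← Complex.exp_add]
      congr 1
      push_cast
      ring
    have hcont : ∀ f : Fin k → Fin m, Continuous fun y : ℝ =>
        Complex.exp ((Complex.I * ((S f - lam : ℝ) : ℂ)) * y) :=
      fun f => Complex.continuous_exp.comp (continuous_const.mul Complex.continuous_ofReal)
    have hint : (∫ y in (0:ℝ)..T, F y ^ k * Complex.exp (-(Complex.I * (lam : ℝ) * y)))
        = ∑ f : Fin k → Fin m, Complex.exp (-(Complex.I * (B f : ℝ))) *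
            ∫ y in (0:ℝ)..T, Complex.exp ((Complex.I * ((S f - lam : ℝ) : ℂ)) * y) := by
      rw [intervalIntegral.integral_congr (fun y _ => hg y),
        intervalIntegral.integral_finset_sum
          (fun f _ => (Continuous.intervalIntegrable (u := fun y : ℝ => Complex.exp (-(Complex.I * (B f : ℝ))) * Complex.exp ((Complex.I * ((S f - lam : ℝ) : ℂ)) * y)) (continuous_const.mul (hcont f)) 0 T))]
      exact Finset.sum_congr rfl fun f _ => intervalIntegral.integral_const_mul _ _
    -- split into main and error parts
    have hsplit : (∑ f : Fin k → Fin m, Complex.exp (-(Complex.I * (B f : ℝ))) *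
            ∫ y in (0:ℝ)..T, Complex.exp ((Complex.I * ((S f - lam : ℝ) : ℂ)) * y))
        = (∑ f ∈ Mset, Complex.exp (-(Complex.I * (B f : ℝ))) *
            ∫ y in (0:ℝ)..T, Complex.exp ((Complex.I * ((S f - lam : ℝ) : ℂ)) * y))
          + ∑ f ∈ offS, Complex.exp (-(Complex.I * (B f : ℝ))) *
            ∫ y in (0:ℝ)..T, Complex.exp ((Complex.I * ((S f - lam : ℝ) : ℂ)) * y) := by
      rw [hMset, hoff, Finset.sum_filter_add_sum_filter_not]
    have hmain : (∑ f ∈ Mset, Complex.exp (-(Complex.I * (B f : ℝ))) *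
            ∫ y in (0:ℝ)..T, Complex.exp ((Complex.I * ((S f - lam : ℝ) : ℂ)) * y))
        = (Mset.card : ℂ) * (u * T) := by
      rw [Finset.sum_congr rfl (fun f hf => ?_), Finset.sum_const, nsmul_eq_mul]
      rw [huf f hf]
      have hSf : S f = lam := (Finset.mem_filter.1 hf).2
      rw [hSf]
      simp
    have hmainnorm : ‖(Mset.card : ℂ) * (u * T)‖ = (Mset.card : ℝ) * T := by
      rw [norm_mul, norm_mul, huabs, one_mul, Complex.norm_natCast, Complex.norm_real,
        Real.norm_eq_abs, abs_of_pos hT]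
    have herr : ‖∑ f ∈ offS, Complex.exp (-(Complex.I * (B f : ℝ))) *
            ∫ y in (0:ℝ)..T, Complex.exp ((Complex.I * ((S f - lam : ℝ) : ℂ)) * y)‖ ≤ C := by
      refine (norm_sum_le _ _).trans (Finset.sum_le_sum fun f hf => ?_)
      have hSf : S f - lam ≠ 0 := sub_ne_zero.2 (by
        simpa [hoff, Finset.mem_filter] using hf)
      have hc0 : (Complex.I * ((S f - lam : ℝ) : ℂ)) ≠ 0 :=
        mul_ne_zero Complex.I_ne_zero (Complex.ofReal_ne_zero.2 hSf)
      rw [norm_mul]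
      have h1 : ‖Complex.exp (-(Complex.I * (B f : ℝ)))‖ = 1 := by
        rw [Complex.norm_exp]; simp
      rw [h1, one_mul, integral_exp_mul_complex hc0]
      have hnormc : ‖Complex.I * ((S f - lam : ℝ) : ℂ)‖ = |S f - lam| := by
        rw [norm_mul, Complex.norm_I, one_mul, Complex.norm_real, Real.norm_eq_abs]
      have hbound : ∀ s : ℝ, ‖Complex.exp (Complex.I * ((S f - lam : ℝ) : ℂ) * s)‖ = 1 := by
        intro s
        rw [Complex.norm_exp]
        simp
      rw [norm_div, hnormc]
      refine (div_le_div_iff_of_pos_right (abs_pos.2 hSf)).2 ?_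
      calc ‖Complex.exp (Complex.I * ((S f - lam : ℝ) : ℂ) * T)
              - Complex.exp (Complex.I * ((S f - lam : ℝ) : ℂ) * (0:ℝ))‖
          ≤ ‖Complex.exp (Complex.I * ((S f - lam : ℝ) : ℂ) * T)‖
            + ‖Complex.exp (Complex.I * ((S f - lam : ℝ) : ℂ) * (0:ℝ))‖ := norm_sub_le _ _
        _ ≤ 2 := by rw [hbound T, hbound 0]; norm_num
    -- upper bound for the integral
    have hup : ‖∫ y in (0:ℝ)..T, F y ^ k * Complex.exp (-(Complex.I * (lam : ℝ) * y))‖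
        ≤ b ^ k * T := by
      have := intervalIntegral.norm_integral_le_of_norm_le_const
        (C := b ^ k) (f := fun y : ℝ => F y ^ k * Complex.exp (-(Complex.I * (lam : ℝ) * y)))
        (a := 0) (b := T) ?_
      · simpa [abs_of_pos hT] using this
      · intro y _
        rw [norm_mul, norm_pow]
        have h1 : ‖Complex.exp (-(Complex.I * (lam : ℝ) * y))‖ = 1 := by
          rw [Complex.norm_exp]; simp
        rw [h1, mul_one]
        exact pow_le_pow_left₀ (norm_nonneg _) (hcon y) k
    -- lower bound
    have hlow : (Mset.card : ℝ) * T - C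
        ≤ ‖∫ y in (0:ℝ)..T, F y ^ k * Complex.exp (-(Complex.I * (lam : ℝ) * y))‖ := by
      rw [hint, hsplit]
      have h2 : ‖(Mset.card : ℂ) * (u * T)‖
          ≤ ‖(∑ f ∈ Mset, Complex.exp (-(Complex.I * (B f : ℝ))) *
            ∫ y in (0:ℝ)..T, Complex.exp ((Complex.I * ((S f - lam : ℝ) : ℂ)) * y))
          + ∑ f ∈ offS, Complex.exp (-(Complex.I * (B f : ℝ))) *
            ∫ y in (0:ℝ)..T, Complex.exp ((Complex.I * ((S f - lam : ℝ) : ℂ)) * y)‖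
          + ‖∑ f ∈ offS, Complex.exp (-(Complex.I * (B f : ℝ))) *
            ∫ y in (0:ℝ)..T, Complex.exp ((Complex.I * ((S f - lam : ℝ) : ℂ)) * y)‖ := by
        rw [← hmain]
        exact norm_le_add_norm_add _ _
      rw [hmainnorm] at h2
      linarith [herr]
    linarith [hlow, hup]
  -- final contradiction
  set Nr : ℝ := (Mset.card : ℝ) with hNr
  have hd : 0 < Nr - b ^ k := by linarith [hN]
  have hTpos : 0 < (C + 1) / (Nr - b ^ k) := by positivity
  have := key _ hTpos
  have heq : (Nr - b ^ k) * ((C + 1) / (Nr - b ^ k)) = C + 1 := by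
    field_simp
  nlinarith [this, heq]

lemma kron_col (d : ℕ) (θ ζ : Fin d → ℝ)
    (H : ∀ ℓ : Fin d → ℤ, (∑ r, (ℓ r : ℝ) * θ r) = 0 →
      ∃ K : ℤ, (∑ r, (ℓ r : ℝ) * ζ r) = 2 * Real.pi * K)
    (k : ℕ) (f g : Fin k → Fin (d + 1))
    (hfg : (∑ t, (Fin.cons 0 θ : Fin (d+1) → ℝ) (f t)) = ∑ t, (Fin.cons 0 θ : Fin (d+1) → ℝ) (g t)) :
    ∃ K : ℤ, (∑ t, (Fin.cons 0 ζ : Fin (d+1) → ℝ) (f t)) - (∑ t, (Fin.cons 0 ζ : Fin (d+1) → ℝ) (g t)) = 2 * Real.pi * K := by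
  set ℓ : Fin d → ℤ := fun r =>
    ((univ.filter fun t => f t = r.succ).card : ℤ)
      - ((univ.filter fun t => g t = r.succ).card : ℤ) with hℓ
  have key : ∀ γ : Fin d → ℝ,
      (∑ r, (ℓ r : ℝ) * γ r) = (∑ t, (Fin.cons 0 γ : Fin (d+1) → ℝ) (f t)) - ∑ t, (Fin.cons 0 γ : Fin (d+1) → ℝ) (g t) := by
    intro γ
    rw [count_sum (d + 1) k (Fin.cons 0 γ : Fin (d+1) → ℝ) f, count_sum (d + 1) k (Fin.cons 0 γ : Fin (d+1) → ℝ) g,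
      Fin.sum_univ_succ, Fin.sum_univ_succ]
    simp only [Fin.cons_zero, Fin.cons_succ, mul_zero, zero_add, hℓ]
    push_cast
    rw [← Finset.sum_sub_distrib]
    exact Finset.sum_congr rfl fun r _ => by ring
  obtain ⟨K, hK⟩ := H ℓ (by rw [key θ, hfg, sub_self])
  exact ⟨K, by rw [← key ζ]; exact hK⟩

lemma choose_k (m : ℕ) (hm : 0 < m) (b : ℝ) (hb : 0 ≤ b) (hbm : b < m) :
    ∃ k : ℕ, b ^ k * ((k : ℝ) + 1) ^ m < (m : ℝ) ^ k := by
  rcases eq_or_lt_of_le hb with hb0 | hb0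
  · refine ⟨1, ?_⟩
    rw [← hb0]
    have : (0:ℝ) < m := by exact_mod_cast hm
    simpa using this
  · set ρ : ℝ := m / b with hρdef
    have hρ : 1 < ρ := (one_lt_div hb0).2 hbm
    have hlo := isLittleO_pow_const_const_pow_of_one_lt (R := ℝ) m hρ
    have hev := hlo.bound (c := 1 / 2 ^ (m + 1)) (by positivity)
    rw [Filter.eventually_atTop] at hev
    obtain ⟨N, hN⟩ := hev
    set n : ℕ := max N 1 with hn
    refine ⟨n, ?_⟩
    have h1 : ((n : ℝ) + 1) ^ m ≤ (2 : ℝ) ^ m * (n : ℝ) ^ m := by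
      rw [← mul_pow]
      refine pow_le_pow_left₀ (by positivity) ?_ m
      have : (1 : ℝ) ≤ (n : ℝ) := by
        exact_mod_cast le_max_right N 1
      linarith
    have h2 := hN n (le_max_left _ _)
    rw [Real.norm_eq_abs, Real.norm_eq_abs, abs_of_nonneg (by positivity),
      abs_of_nonneg (by positivity : (0:ℝ) ≤ ρ ^ n)] at h2
    have h3 : ((n : ℝ) + 1) ^ m ≤ ρ ^ n / 2 := by
      calc ((n : ℝ) + 1) ^ m ≤ (2 : ℝ) ^ m * (n : ℝ) ^ m := h1
        _ ≤ (2 : ℝ) ^ m * (1 / 2 ^ (m + 1) * ρ ^ n) := by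
            exact mul_le_mul_of_nonneg_left h2 (by positivity)
        _ = ρ ^ n / 2 := by field_simp; ring
    have hρn : 0 < ρ ^ n := by positivity
    have hbn : 0 < b ^ n := by positivity
    calc b ^ n * ((n : ℝ) + 1) ^ m ≤ b ^ n * (ρ ^ n / 2) := by
          exact mul_le_mul_of_nonneg_left h3 (by positivity)
      _ < b ^ n * ρ ^ n := by nlinarith
      _ = (m : ℝ) ^ n := by
          rw [← mul_pow, hρdef, mul_div_cancel₀ _ (ne_of_gt hb0)]

/-- Kronecker's theorem: the system `|θ_r y − ζ_r| < ε (mod 2π)` is solvable for every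
`ε > 0` iff every integer relation `∑ ℓ_r θ_r = 0` satisfies `∑ ℓ_r ζ_r ≡ 0 (mod 2π)`. -/
theorem stmt12 (d : ℕ) (θ ζ : Fin d → ℝ) :
    (∀ ε > (0 : ℝ), ∃ y : ℝ, ∀ r : Fin d, ∃ k : ℤ, |θ r * y - ζ r - 2 * Real.pi * k| < ε) ↔
    (∀ ℓ : Fin d → ℤ, (∑ r, (ℓ r : ℝ) * θ r) = 0 →
      ∃ k : ℤ, (∑ r, (ℓ r : ℝ) * ζ r) = 2 * Real.pi * k) := by
  constructor
  · -- easy direction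
    intro hsol ℓ hrel
    set c : ℝ := ∑ r, (ℓ r : ℝ) * ζ r with hc
    set L : ℝ := (∑ r, |(ℓ r : ℝ)|) + 1 with hL
    have hL0 : 0 < L := by
      rw [hL]
      have : 0 ≤ ∑ r, |(ℓ r : ℝ)| := Finset.sum_nonneg fun r _ => abs_nonneg _
      linarith
    have claim : ∀ η : ℝ, 0 < η → ∃ K : ℤ, |c - 2 * Real.pi * K| < η := by
      intro η hη
      obtain ⟨y, hy⟩ := hsol (η / L) (by positivity)
      choose kk hkk using hy
      refine ⟨-∑ r, ℓ r * kk r, ?_⟩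
      have hsumb : |∑ r, (ℓ r : ℝ) * (θ r * y - ζ r - 2 * Real.pi * kk r)| < η := by
        calc |∑ r, (ℓ r : ℝ) * (θ r * y - ζ r - 2 * Real.pi * kk r)|
            ≤ ∑ r, |(ℓ r : ℝ) * (θ r * y - ζ r - 2 * Real.pi * kk r)| :=
              Finset.abs_sum_le_sum_abs _ _
          _ ≤ ∑ r, |(ℓ r : ℝ)| * (η / L) := by
              refine Finset.sum_le_sum fun r _ => ?_
              rw [abs_mul]
              exact mul_le_mul_of_nonneg_left (hkk r).le (abs_nonneg _)
          _ = (∑ r, |(ℓ r : ℝ)|) * (η / L) := by rw [← Finset.sum_mul]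
          _ < L * (η / L) := by
              refine mul_lt_mul_of_pos_right ?_ (by positivity)
              rw [hL]; linarith
          _ = η := by field_simp
      have hexp : ∑ r, (ℓ r : ℝ) * (θ r * y - ζ r - 2 * Real.pi * kk r)
          = -c - 2 * Real.pi * (∑ r, (ℓ r : ℝ) * kk r) := by
        have e1 : ∑ r, (ℓ r : ℝ) * (θ r * y - ζ r - 2 * Real.pi * kk r)
            = (∑ r, (ℓ r : ℝ) * θ r) * y - (∑ r, (ℓ r : ℝ) * ζ r)
              - 2 * Real.pi * ∑ r, (ℓ r : ℝ) * kk r := by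
          rw [Finset.sum_mul, Finset.mul_sum, ← Finset.sum_sub_distrib, ← Finset.sum_sub_distrib]
          exact Finset.sum_congr rfl fun r _ => by ring
        rw [e1, hrel, hc]; ring
      rw [hexp] at hsumb
      have hcast : ((-∑ r, ℓ r * kk r : ℤ) : ℝ) = -∑ r, (ℓ r : ℝ) * kk r := by
        push_cast; ring
      rw [hcast, show c - 2 * Real.pi * -(∑ r, (ℓ r : ℝ) * kk r)
          = -(-c - 2 * Real.pi * (∑ r, (ℓ r : ℝ) * kk r)) from by ring, abs_neg]
      exact hsumb
    obtain ⟨K₀, hK₀⟩ := claim Real.pi Real.pi_pos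
    refine ⟨K₀, ?_⟩
    by_contra hne
    have hd : 0 < |c - 2 * Real.pi * K₀| := abs_pos.2 (sub_ne_zero.2 hne)
    obtain ⟨K, hK⟩ := claim (min |c - 2 * Real.pi * K₀| Real.pi)
      (lt_min hd Real.pi_pos)
    have hKpi : |c - 2 * Real.pi * K| < Real.pi := hK.trans_le (min_le_right _ _)
    have : K = K₀ := by
      have h2 : |2 * Real.pi * (K : ℝ) - 2 * Real.pi * K₀| < 2 * Real.pi := by
        calc |2 * Real.pi * (K : ℝ) - 2 * Real.pi * K₀|
            ≤ |c - 2 * Real.pi * K| + |c - 2 * Real.pi * K₀| := by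
              rw [abs_sub_comm c _]
              calc |2 * Real.pi * (K : ℝ) - 2 * Real.pi * K₀|
                  = |(2 * Real.pi * K - c) + (c - 2 * Real.pi * K₀)| := by ring_nf
                _ ≤ _ := abs_add_le _ _
          _ < 2 * Real.pi := by linarith
      by_contra hKne
      have h3 : (1 : ℝ) ≤ |(K : ℝ) - K₀| := by
        have : (1 : ℤ) ≤ |K - K₀| := Int.one_le_abs (sub_ne_zero.2 hKne)
        calc (1:ℝ) = ((1:ℤ):ℝ) := by norm_num
          _ ≤ ((|K - K₀| : ℤ) : ℝ) := by exact_mod_cast this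
          _ = |(K : ℝ) - K₀| := by push_cast; rfl
      have h4 : |2 * Real.pi * (K : ℝ) - 2 * Real.pi * K₀|
          = 2 * Real.pi * |(K : ℝ) - K₀| := by
        rw [show 2 * Real.pi * (K : ℝ) - 2 * Real.pi * K₀
            = 2 * Real.pi * ((K : ℝ) - K₀) from by ring, abs_mul,
          abs_of_pos (by positivity)]
      nlinarith [Real.pi_pos]
    subst this
    have : |c - 2 * Real.pi * K| < |c - 2 * Real.pi * K| :=
      hK.trans_le (min_le_left _ _)
    exact absurd this (lt_irrefl _)
  · -- hard direction
    intro H ε hε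
    rcases Nat.eq_zero_or_pos d with hd0 | hd0
    · subst hd0; exact ⟨0, fun r => r.elim0⟩
    set ε' : ℝ := min ε (Real.pi / 2) with hε'
    have hε'pos : 0 < ε' := lt_min hε (by positivity)
    have hε'le : ε' ≤ Real.pi / 2 := min_le_right _ _
    have hπ2 : Real.pi / 2 ≤ Real.pi := by linarith [Real.pi_pos]
    have hcos1 : Real.cos ε' < 1 := by
      have := Real.strictAntiOn_cos (Set.mem_Icc.2 ⟨le_refl 0, Real.pi_pos.le⟩)
        (Set.mem_Icc.2 ⟨hε'pos.le, hε'le.trans hπ2⟩) hε'pos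
      rwa [Real.cos_zero] at this
    have hcosnn : 0 ≤ Real.cos ε' :=
      Real.cos_nonneg_of_mem_Icc (Set.mem_Icc.2 ⟨by linarith [hε'pos], hε'le⟩)
    set δ : ℝ := (1 - Real.cos ε') / 2 with hδ
    have hδpos : 0 < δ := by rw [hδ]; linarith
    have hδhalf : δ ≤ 1 / 2 := by rw [hδ]; linarith
    set b : ℝ := (d : ℝ) + 1 - δ with hb
    have hd1 : (1 : ℝ) ≤ (d : ℝ) := by exact_mod_cast hd0
    have hb0 : 0 ≤ b := by rw [hb]; linarith
    have hbm : b < ((d + 1 : ℕ) : ℝ) := by push_cast; rw [hb]; linarith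
    obtain ⟨k, hbk⟩ := choose_k (d + 1) (Nat.succ_pos d) b hb0 hbm
    obtain ⟨y, hy⟩ := kron_core (d + 1) k (Fin.cons 0 θ : Fin (d+1) → ℝ) (Fin.cons 0 ζ : Fin (d+1) → ℝ)
      (fun f g hfg => kron_col d θ ζ H k f g hfg) b hb0 (by push_cast at hbk ⊢; exact hbk)
    refine ⟨y, fun r => ?_⟩
    set x : ℝ := θ r * y - ζ r with hx
    set K : ℤ := round (x / (2 * Real.pi)) with hK
    refine ⟨K, ?_⟩
    -- z and norm bounds
    set E : Fin (d + 1) → ℂ :=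
      fun j => Complex.exp (Complex.I * (((Fin.cons 0 θ : Fin (d+1) → ℝ) j : ℝ) * y - ((Fin.cons 0 ζ : Fin (d+1) → ℝ) j : ℝ))) with hE
    have hE0 : E 0 = 1 := by
      rw [hE]; simp
    have hEnorm : ∀ j, ‖E j‖ = 1 := by
      intro j
      rw [hE, Complex.norm_exp]
      simp
    have hrest : ‖(∑ j, E j) - E 0 - E r.succ‖ ≤ (d : ℝ) - 1 := by
      have hne : (0 : Fin (d+1)) ∉ ({r.succ} : Finset (Fin (d+1))) := by
        simp [(Fin.succ_ne_zero r).symm]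
      have hsd : (∑ j, E j) - E 0 - E r.succ = ∑ j ∈ univ \ {0, r.succ}, E j := by
        rw [Finset.sum_sdiff_eq_sub (Finset.subset_univ _)]
        rw [Finset.sum_insert hne, Finset.sum_singleton]
        ring
      rw [hsd]
      calc ‖∑ j ∈ univ \ {0, r.succ}, E j‖ ≤ ∑ j ∈ univ \ {0, r.succ}, ‖E j‖ :=
            norm_sum_le _ _
        _ = (univ \ {0, r.succ} : Finset (Fin (d+1))).card • (1:ℝ) := by
            rw [Finset.sum_congr rfl fun j _ => hEnorm j, Finset.sum_const]
        _ = ((d + 1) - 2 : ℕ) := by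
            rw [Finset.card_sdiff_of_subset (Finset.subset_univ _), Finset.card_univ, Fintype.card_fin,
              Finset.card_insert_of_notMem hne, Finset.card_singleton]
            simp
        _ ≤ (d : ℝ) - 1 := by
            have : (d + 1) - 2 = d - 1 := by omega
            rw [this, Nat.cast_sub hd0]
            push_cast
            linarith
    have hz : (2 : ℝ) - δ < ‖(1 : ℂ) + E r.succ‖ := by
      have h5 : (∑ j, E j) = (1 + E r.succ) + ((∑ j, E j) - E 0 - E r.succ) := by
        rw [hE0]; ring
      have h6 : ‖∑ j, E j‖ ≤ ‖(1:ℂ) + E r.succ‖ + ((d:ℝ) - 1) := by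
        rw [h5]
        exact (norm_add_le _ _).trans (by linarith [hrest])
      have h7 : b < ‖∑ j, E j‖ := hy
      rw [hb] at h7
      linarith
    -- pass to cosine
    have harg : Complex.I * (((Fin.cons 0 θ : Fin (d+1) → ℝ) r.succ : ℝ) * (y:ℝ) -
        ((Fin.cons 0 ζ : Fin (d+1) → ℝ) r.succ : ℝ)) = (x : ℝ) * Complex.I := by
      rw [hx]
      push_cast [Fin.cons_succ]
      ring
    have hzx : E r.succ = Complex.exp ((x : ℝ) * Complex.I) := by
      rw [hE]
      exact congrArg Complex.exp harg
    have hre : (E r.succ).re = Real.cos x := by rw [hzx, Complex.exp_ofReal_mul_I_re]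
    have him : (E r.succ).im = Real.sin x := by rw [hzx, Complex.exp_ofReal_mul_I_im]
    have hnormsq : ‖(1 : ℂ) + E r.succ‖ ^ 2 = 2 + 2 * Real.cos x := by
      rw [Complex.sq_norm, Complex.normSq_apply]
      simp only [Complex.add_re, Complex.add_im, Complex.one_re, Complex.one_im, hre, him,
        zero_add]
      nlinarith [Real.sin_sq_add_cos_sq x]
    have hcosx : Real.cos ε' < Real.cos x := by
      have h8 : ((2:ℝ) - δ) ^ 2 < ‖(1 : ℂ) + E r.succ‖ ^ 2 := by
        have h2δ : (0:ℝ) ≤ 2 - δ := by linarith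
        exact pow_lt_pow_left₀ hz h2δ (by norm_num)
      rw [hnormsq] at h8
      have hδsq : 0 < δ ^ 2 := by positivity
      have h1cos : 1 - 2 * δ = Real.cos ε' := by rw [hδ]; ring
      have hexpand : ((2:ℝ) - δ) ^ 2 = 4 - 4 * δ + δ ^ 2 := by ring
      linarith [h8]
    -- reduce mod 2π
    have hcosK : Real.cos (x - 2 * Real.pi * K) = Real.cos x := by
      rw [show x - 2 * Real.pi * K = x + (-K : ℤ) * (2 * Real.pi) from by push_cast; ring]
      exact Real.cos_add_int_mul_two_pi x (-K)
    have hxKpi : |x - 2 * Real.pi * K| ≤ Real.pi := by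
      have h9 := abs_sub_round (x / (2 * Real.pi))
      have hπ0 : (2 : ℝ) * Real.pi > 0 := by positivity
      have h10 : x - 2 * Real.pi * K = (2 * Real.pi) * (x / (2 * Real.pi) - K) := by
        field_simp
      rw [h10, abs_mul, abs_of_pos hπ0]
      calc 2 * Real.pi * |x / (2 * Real.pi) - (K:ℝ)| ≤ 2 * Real.pi * (1/2) :=
            mul_le_mul_of_nonneg_left (by rw [hK]; exact_mod_cast h9) (by positivity)
        _ = Real.pi := by ring
    -- conclude
    have hfinal : |x - 2 * Real.pi * K| < ε' := by
      by_contra hge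
      push_neg at hge
      have hle : Real.cos |x - 2 * Real.pi * K| ≤ Real.cos ε' := by
        rcases eq_or_lt_of_le hge with heq | hlt
        · rw [← heq]
        · exact (Real.strictAntiOn_cos (Set.mem_Icc.2 ⟨hε'pos.le, hε'le.trans hπ2⟩)
            (Set.mem_Icc.2 ⟨abs_nonneg _, hxKpi⟩) hlt).le
      rw [Real.cos_abs, hcosK] at hle
      linarith
    calc |θ r * y - ζ r - 2 * Real.pi * K| = |x - 2 * Real.pi * K| := by rw [hx]
      _ < ε' := hfinal
      _ ≤ ε := min_le_left _ _
end

section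
/- Let p be an odd prime, t ≥ 2 an integer, n = 2^t p − 1, and let a ≠ b be vertices of P_n with α ∈ {1, −1} and a + αb ≡ 0 (mod 2^t). Then the state v = (1/√2)(|a⟩ + α|b⟩) satisfies E_{2pj} v = 0 for all 1 ≤ j < 2^{t−1}; i.e., the eigenvalues θ_{2pj} = 2cos(2pjπ/(2^t p)) = 2cos(jπ/2^{t−1}) are absent from the eigenvalue support of v. -/
open Matrix Real

/-!
Every eigenprojection of the path is a rank-one matrix `E_r = s sᵀ` with
`s_k = √(2/(n+1)) sin(k r π/(n+1))`, so `E_r v = 0` as soon as `s_a + α s_b = 0`.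
For `r = 2pj` and `n + 1 = 2^t p` the angle `(a + α b) r π/(n+1)` equals `(a + α b) j π / 2^{t-1}`,
a multiple of `2π` when `2^t ∣ a + α b`; since `α = ±1`, `sin (a r π/(n+1)) = -α sin (b r π/(n+1))`.
-/

theorem Pi.ite_eq_single_add_single {ι R : Type*} [DecidableEq ι] [AddZeroClass R]
    {a b : ι} (hab : a ≠ b) (x y : R) :
    (fun i => if i = a then x else if i = b then y else 0) = Pi.single a x + Pi.single b y := by
  funext i
  by_cases ha : i = a
  · subst ha; simp [hab]
  · by_cases hb : i = b
    · subst hb; simp [ha]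
    · simp [ha, hb]

theorem Matrix.mulVec_single_add_single {m n R : Type*} [Fintype n] [DecidableEq n]
    [NonUnitalNonAssocSemiring R] (M : Matrix m n R) (a b : n) (x y : R) :
    M *ᵥ (Pi.single a x + Pi.single b y) = fun i => M i a * x + M i b * y := by
  rw [mulVec_add, mulVec_single, mulVec_single]
  rfl

theorem Real.sin_intCast_mul_of_sign {α : ℤ} (hα : α = 1 ∨ α = -1) (x : ℝ) :
    sin (α * x) = α * sin x := by
  rcases hα with rfl | rfl <;> simp

theorem Real.sin_add_intCast_mul_sin_eq_zero {α m : ℤ} (hα : α = 1 ∨ α = -1) {x y : ℝ}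
    (h : x + α * y = m * (2 * π)) : sin x + α * sin y = 0 := by
  have hx : x = -(α * y) + m * (2 * π) := by linarith
  rw [hx, sin_add_int_mul_two_pi, sin_neg, sin_intCast_mul_of_sign hα]
  ring

theorem stmt13_general (p t : ℕ)
    (n : ℕ) (hn : n = 2 ^ t * p - 1)
    (a b : Fin n) (hab : a ≠ b) (α : ℤ) (hα : α = 1 ∨ α = -1)
    (hdiv : (2 ^ t : ℤ) ∣ ((a.1 : ℤ) + 1) + α * ((b.1 : ℤ) + 1))
    (E : ℕ → Matrix (Fin n) (Fin n) ℝ)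
    (hE : ∀ (r : ℕ) (k l : Fin n), E r k l =
      (2 / (n + 1)) * Real.sin ((k.1 + 1) * r * Real.pi / (n + 1)) *
        Real.sin ((l.1 + 1) * r * Real.pi / (n + 1)))
    (v : Fin n → ℝ)
    (hv : v = fun x => if x = a then 1 / Real.sqrt 2
      else if x = b then (α : ℝ) / Real.sqrt 2 else 0) :
    ∀ j : ℕ, 1 ≤ j → j < 2 ^ (t - 1) → E (2 * p * j) *ᵥ v = 0 := by
  intro j _ _
  -- `a : Fin n` forces `n > 0`, so the subtraction in `hn` does not truncate.
  have hN : (n : ℝ) + 1 = 2 ^ t * p := by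
    have := a.pos
    exact_mod_cast (by omega : n + 1 = 2 ^ t * p)
  have hp0 : (p : ℝ) ≠ 0 := by
    rintro hp0
    simp only [hp0, mul_zero] at hN
    linarith
  obtain ⟨m, hm⟩ := hdiv
  have hm' : ((a.1 : ℝ) + 1) + α * ((b.1 : ℝ) + 1) = 2 ^ t * m := by exact_mod_cast hm
  have hsin := sin_add_intCast_mul_sin_eq_zero (m := m * j) hα
    (x := (a.1 + 1) * (2 * p * j : ℕ) * π / (n + 1))
    (y := (b.1 + 1) * (2 * p * j : ℕ) * π / (n + 1)) (by
      calc _ = (((a.1 : ℝ) + 1) + α * ((b.1 : ℝ) + 1)) * (2 * p * j * π) / (2 ^ t * p) := by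
            rw [hN]; push_cast; ring
        _ = (m * j : ℤ) * (2 * π) := by
            rw [hm']; push_cast; field_simp)
  ext k
  rw [hv, Pi.ite_eq_single_add_single hab, mulVec_single_add_single]
  simp only [hE, Pi.zero_apply]
  linear_combination (2 / (n + 1) * sin ((k.1 + 1) * (2 * p * j : ℕ) * π / (n + 1)) / √2) * hsin

/-- On `P_n` with `n = 2^t p − 1`, if `a ≠ b`, `α = ±1` and `2^t ∣ a + αb`, then the state
`(1/√2)(|a⟩ + α|b⟩)` satisfies `E_{2pj} v = 0` for all `1 ≤ j < 2^{t−1}`. -/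
theorem stmt13 (p t : ℕ) (hp : Nat.Prime p) (hodd : Odd p) (ht : 2 ≤ t)
    (n : ℕ) (hn : n = 2 ^ t * p - 1)
    (a b : Fin n) (hab : a ≠ b) (α : ℤ) (hα : α = 1 ∨ α = -1)
    (hdiv : (2 ^ t : ℤ) ∣ ((a.1 : ℤ) + 1) + α * ((b.1 : ℤ) + 1))
    (E : ℕ → Matrix (Fin n) (Fin n) ℝ)
    (hE : ∀ (r : ℕ) (k l : Fin n), E r k l =
      (2 / (n + 1)) * Real.sin ((k.1 + 1) * r * Real.pi / (n + 1)) *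
        Real.sin ((l.1 + 1) * r * Real.pi / (n + 1)))
    (v : Fin n → ℝ)
    (hv : v = fun x => if x = a then 1 / Real.sqrt 2
      else if x = b then (α : ℝ) / Real.sqrt 2 else 0) :
    ∀ j : ℕ, 1 ≤ j → j < 2 ^ (t - 1) → E (2 * p * j) *ᵥ v = 0 :=
  stmt13_general p t n hn a b hab α hα hdiv E hE v hv
end

section
/- Let m = 2^t p^s with p an odd prime, and suppose integers ℓ_1, …, ℓ_{m−1} satisfy Σ_j ℓ_j θ_j = 0 where θ_j = 2cos(jπ/m). If for some residue class c mod (m/p) there exists an index j_c ≡ c (mod m/p) with ℓ_{j_c} = ℓ_{m−j_c} = 0, then ℓ_j = ℓ_{m−j} for every j ≡ c (mod m/p). -/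
/-!
Put `ζ = exp(πi/m)`, a primitive `2m`-th root of unity, and `n = m/p`. Since
`ζ^(m-j) = -ζ^(-j)`, the relation says that `ζ` is a root of `D = ∑ ℓ_j (X^j - X^(m-j))`, an
integer polynomial of degree `< m = p n` whose `k`-th coefficient is `ℓ_k - ℓ_{m-k}`. Hence `D` is
divisible by `Φ_{2m}(X) = ∑_{i<p} (-X^n)^i`, and the quotient has degree `< n`. Multiplying a
polynomial of degree `< n` by `∑_{i<p} (-X^n)^i` just places copies of it with alternating signs
in the blocks `[q n, (q+1) n)`, so the coefficient of `D` at `q n + r` is `(-1)^q` times that at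
`r`: in a residue class mod `n` the differences `ℓ_j - ℓ_{m-j}` agree up to sign, and one of them
vanishing makes all of them vanish.
-/

open Finset Polynomial

noncomputable def altGeom (R : Type*) [CommRing R] (p : ℕ) : R[X] :=
  ∑ i ∈ range p, (-X) ^ i

section
variable {R : Type*} [CommRing R]

theorem coeff_altGeom (p k : ℕ) :
    (altGeom R p).coeff k = if k < p then (-1) ^ k else 0 := by
  have h : ∀ i, ((-X) ^ i : R[X]) = C ((-1) ^ i) * X ^ i := fun i => by
    rw [neg_pow, map_pow, map_neg, map_one]
  simp only [altGeom, h, finsetSum_coeff, coeff_C_mul_X_pow, Finset.sum_ite_eq, Finset.mem_range]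

theorem X_add_one_mul_altGeom {p : ℕ} (hp : Odd p) : (X + 1) * altGeom R p = X ^ p + 1 := by
  have h := geom_sum_mul (-(X : R[X])) p
  rw [hp.neg_pow] at h
  rw [altGeom]
  linear_combination -h

theorem coeff_expand_mul_of_natDegree_lt {n : ℕ} (f g : R[X]) (hg : g.natDegree < n)
    (q : ℕ) {r : ℕ} (hr : r < n) :
    (expand R n f * g).coeff (q * n + r) = f.coeff q * g.coeff r := by
  induction f using Polynomial.induction_on' with
  | add f₁ f₂ h₁ h₂ => rw [map_add, add_mul, coeff_add, h₁, h₂, coeff_add, add_mul]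
  | monomial i a =>
    rw [expand_monomial, ← C_mul_X_pow_eq_monomial, mul_assoc, coeff_C_mul, coeff_X_pow_mul',
      coeff_monomial]
    rcases lt_trichotomy i q with hiq | rfl | hqi
    · have : i * n + n ≤ q * n := Nat.succ_mul i n ▸ Nat.mul_le_mul_right n hiq
      rw [if_pos (by omega), if_neg hiq.ne, coeff_eq_zero_of_natDegree_lt (by omega), zero_mul,
        mul_zero]
    · simp
    · have : q * n + n ≤ i * n := Nat.succ_mul q n ▸ Nat.mul_le_mul_right n hqi
      rw [if_neg (by omega), if_neg hqi.ne', mul_zero, zero_mul]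

theorem monic_altGeom {p : ℕ} (hp : Odd p) : (altGeom R p).Monic :=
  (monic_X_add_C 1).of_mul_monic_left <| by
    rw [C_1, X_add_one_mul_altGeom hp]
    exact monic_X_pow_add_C 1 hp.pos.ne'

variable [Nontrivial R]

theorem natDegree_altGeom {p : ℕ} (hp : Odd p) : (altGeom R p).natDegree = p - 1 := by
  have h := congrArg natDegree (X_add_one_mul_altGeom (R := R) hp)
  rw [← C_1, (monic_X_add_C (1 : R)).natDegree_mul (monic_altGeom hp), natDegree_X_add_C,
    natDegree_X_pow_add_C] at h
  omega

theorem coeff_eq_neg_one_pow_mul_coeff_mod {p n : ℕ} (hp : Odd p) {D : R[X]}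
    (hD : expand R n (altGeom R p) ∣ D) (hdeg : D.natDegree < p * n) {k : ℕ} (hk : k < p * n) :
    D.coeff k = (-1) ^ (k / n) * D.coeff (k % n) := by
  obtain ⟨g, rfl⟩ := hD
  have hn : 0 < n := Nat.pos_of_ne_zero (by rintro rfl; simp at hk)
  by_cases hg : g = 0
  · simp [hg]
  have hgdeg : g.natDegree < n := by
    rw [((monic_altGeom hp).expand hn).natDegree_mul' hg, natDegree_expand,
      natDegree_altGeom hp, Nat.sub_one_mul] at hdeg
    have : n ≤ p * n := Nat.le_mul_of_pos_left n hp.pos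
    omega
  have hkn : k / n < p := Nat.div_lt_of_lt_mul (by rwa [mul_comm])
  have hk' := coeff_expand_mul_of_natDegree_lt (altGeom R p) g hgdeg (k / n) (Nat.mod_lt k hn)
  have h0 := coeff_expand_mul_of_natDegree_lt (altGeom R p) g hgdeg 0 (Nat.mod_lt k hn)
  rw [Nat.div_add_mod'] at hk'
  rw [zero_mul, zero_add] at h0
  rw [hk', h0, coeff_altGeom, coeff_altGeom, if_pos hkn, if_pos hp.pos, pow_zero, one_mul]
end

theorem aeval_altGeom_eq_zero {R K : Type*} [CommRing R] [CommRing K] [IsDomain K] [Algebra R K]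
    {p : ℕ} (hodd : Odd p) (hp1 : p ≠ 1) {ω : K} (hω : IsPrimitiveRoot ω (2 * p)) :
    aeval ω (altGeom R p) = 0 := by
  have hp := hodd.pos
  have hωp : ω ^ p = -1 := (hω.pow (by positivity) (mul_comm 2 p)).eq_neg_one_of_two_right
  have hω1 : ω + 1 ≠ 0 := fun h => by
    refine hω.pow_ne_one_of_pos_of_lt two_ne_zero (by omega) ?_
    rw [eq_neg_of_add_eq_zero_left h, neg_one_sq]
  have h := congrArg (aeval ω) (X_add_one_mul_altGeom (R := R) hodd)
  rw [map_mul, map_add, map_add, map_pow, aeval_X, map_one, hωp, neg_add_cancel] at h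
  exact (mul_eq_zero.1 h).resolve_left hω1

theorem cyclotomic_eq_expand_altGeom {p : ℕ} (hp : p.Prime) (hodd : Odd p) (t k : ℕ) :
    cyclotomic (2 * (2 ^ t * p ^ k * p)) ℤ = expand ℤ (2 ^ t * p ^ k) (altGeom ℤ p) := by
  set n := 2 ^ t * p ^ k with hn
  have hN : 0 < 2 * (n * p) := by have := hodd.pos; positivity
  have hζ := Complex.isPrimitiveRoot_exp _ hN.ne'
  have hroot : aeval (Complex.exp (2 * Real.pi * Complex.I / ↑(2 * (n * p))))
      (expand ℤ n (altGeom ℤ p)) = 0 := by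
    rw [expand_aeval]
    exact aeval_altGeom_eq_zero hodd hp.one_lt.ne' (hζ.pow hN (by ring))
  refine (eq_of_monic_of_dvd_of_natDegree_le (cyclotomic.monic _ ℤ)
    ((monic_altGeom hodd).expand (by have := hodd.pos; positivity)) ?_ ?_).symm
  · rw [cyclotomic_eq_minpoly hζ hN]
    exact minpoly.isIntegrallyClosed_dvd (hζ.isIntegral hN) hroot
  · have h2p : 2 * (n * p) = 2 ^ (t + 1) * p ^ (k + 1) := by ring
    have hcop : Nat.Coprime (2 ^ (t + 1)) (p ^ (k + 1)) :=
      Nat.Coprime.pow _ _ (Nat.coprime_two_left.2 hodd)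
    rw [natDegree_expand, natDegree_altGeom hodd, natDegree_cyclotomic, h2p, Nat.totient_mul hcop,
      Nat.totient_prime_pow_succ Nat.prime_two, Nat.totient_prime_pow_succ hp]
    exact le_of_eq (by rw [hn]; ring)

noncomputable def cosSumPoly (m : ℕ) (ℓ : ℕ → ℤ) : ℤ[X] :=
  ∑ j ∈ Ico 1 m, C (ℓ j) * (X ^ j - X ^ (m - j))

theorem coeff_cosSumPoly (m : ℕ) (ℓ : ℕ → ℤ) {k : ℕ} (hk1 : 1 ≤ k) (hkm : k < m) :
    (cosSumPoly m ℓ).coeff k = ℓ k - ℓ (m - k) := by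
  simp only [cosSumPoly, mul_sub, finsetSum_coeff, coeff_sub, coeff_C_mul_X_pow,
    Finset.sum_sub_distrib, Finset.sum_ite_eq, Finset.mem_Ico, if_pos (And.intro hk1 hkm)]
  rw [Finset.sum_eq_single (m - k) (fun j hj hne => if_neg (by simp at hj; omega))
    (fun h => absurd (Finset.mem_Ico.2 (by omega)) h), if_pos (by omega)]

theorem natDegree_cosSumPoly_lt {m : ℕ} (hm : 0 < m) (ℓ : ℕ → ℤ) :
    (cosSumPoly m ℓ).natDegree < m := by
  have : (cosSumPoly m ℓ).natDegree ≤ m - 1 := natDegree_sum_le_of_forall_le _ _ fun j hj => by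
    rw [Finset.mem_Ico] at hj
    refine (natDegree_C_mul_le _ _).trans ((natDegree_sub_le _ _).trans ?_)
    rw [natDegree_X_pow, natDegree_X_pow]
    omega
  omega

theorem aeval_cosSumPoly (m : ℕ) (ℓ : ℕ → ℤ) :
    aeval (Complex.exp (Real.pi * Complex.I / m)) (cosSumPoly m ℓ) =
      ((∑ j ∈ Ico 1 m, (ℓ j : ℝ) * (2 * Real.cos (j * Real.pi / m)) : ℝ) : ℂ) := by
  rw [cosSumPoly, map_sum, Complex.ofReal_sum]
  refine Finset.sum_congr rfl fun j hj => ?_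
  rw [Finset.mem_Ico] at hj
  have hm : (m : ℂ) ≠ 0 := Nat.cast_ne_zero.2 (by omega)
  have hj₁ : (j : ℂ) * (Real.pi * Complex.I / m) = (j * Real.pi / m : ℂ) * Complex.I := by
    ring
  have hj₂ : ((m - j : ℕ) : ℂ) * (Real.pi * Complex.I / m) =
      Real.pi * Complex.I + -(j * Real.pi / m : ℂ) * Complex.I := by
    rw [Nat.cast_sub hj.2.le]; field_simp; ring
  rw [map_mul, map_sub, map_pow, map_pow, aeval_X, aeval_C, eq_intCast, ← Complex.exp_nat_mul,
    ← Complex.exp_nat_mul, hj₁, hj₂, Complex.exp_add, Complex.exp_pi_mul_I]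
  push_cast
  rw [Complex.two_cos]
  ring

theorem sub_reflect_eq_neg_one_pow_mul_coeff {p s t m : ℕ} (hp : p.Prime) (hodd : Odd p)
    (hs : 1 ≤ s) (hm : m = 2 ^ t * p ^ s) {ℓ : ℕ → ℤ}
    (hrel : ∑ j ∈ Ico 1 m, (ℓ j : ℝ) * (2 * Real.cos (j * Real.pi / m)) = 0)
    {k : ℕ} (hk1 : 1 ≤ k) (hkm : k < m) :
    ℓ k - ℓ (m - k) = (-1) ^ (k / (m / p)) * (cosSumPoly m ℓ).coeff (k % (m / p)) := by
  set n := 2 ^ t * p ^ (s - 1)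
  have hmn : m = n * p := by rw [hm, mul_assoc, ← pow_succ, Nat.sub_add_cancel hs]
  have hpn : p * n = m := by rw [hmn, mul_comm]
  have hN : 0 < 2 * m := by omega
  have hζ : IsPrimitiveRoot (Complex.exp (Real.pi * Complex.I / m)) (2 * m) := by
    convert Complex.isPrimitiveRoot_exp (2 * m) hN.ne' using 2
    have : (m : ℂ) ≠ 0 := Nat.cast_ne_zero.2 (by omega)
    push_cast
    field_simp
  have hdvd : expand ℤ n (altGeom ℤ p) ∣ cosSumPoly m ℓ := by
    rw [← cyclotomic_eq_expand_altGeom hp hodd, ← hmn, cyclotomic_eq_minpoly hζ hN]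
    refine minpoly.isIntegrallyClosed_dvd (hζ.isIntegral hN) ?_
    rw [aeval_cosSumPoly, hrel, Complex.ofReal_zero]
  have hmp : m / p = n := by rw [← hpn, Nat.mul_div_cancel_left n hp.pos]
  rw [← coeff_cosSumPoly m ℓ hk1 hkm, hmp]
  refine coeff_eq_neg_one_pow_mul_coeff_mod hodd hdvd ?_ (hpn ▸ hkm)
  exact hpn ▸ natDegree_cosSumPoly_lt (by omega) ℓ

/-- If some index `j_c ≡ c (mod m/p)` has `ℓ_{j_c} = ℓ_{m−j_c} = 0`, then `ℓ_j = ℓ_{m−j}`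
for every `j ≡ c (mod m/p)`, given the relation `∑ ℓ_j θ_j = 0` with `θ_j = 2cos(jπ/m)`. -/
theorem stmt15 (p s t m : ℕ) (hp : Nat.Prime p) (hodd : Odd p) (hs : 1 ≤ s)
    (hm : m = 2 ^ t * p ^ s) (ℓ : ℕ → ℤ)
    (hrel : ∑ j ∈ Finset.Ico 1 m, (ℓ j : ℝ) * (2 * Real.cos (j * Real.pi / m)) = 0)
    (c jc : ℕ) (hjc1 : 1 ≤ jc) (hjc2 : jc ≤ m - 1) (hjcc : jc % (m / p) = c)
    (h0 : ℓ jc = 0) (h0' : ℓ (m - jc) = 0) :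
    ∀ j : ℕ, 1 ≤ j → j ≤ m - 1 → j % (m / p) = c → ℓ j = ℓ (m - j) := by
  have hdiff k (hk1 : 1 ≤ k) (hk2 : k ≤ m - 1) :=
    sub_reflect_eq_neg_one_pow_mul_coeff hp hodd hs hm hrel hk1 (by omega : k < m)
  have hc : (cosSumPoly m ℓ).coeff c = 0 := by
    have h := hdiff jc hjc1 hjc2
    rwa [h0, h0', sub_zero, eq_comm, hjcc, mul_eq_zero, or_iff_right (by simp)] at h
  intro j hj1 hj2 hjc
  rw [← sub_eq_zero, hdiff j hj1 hj2, hjc, hc, mul_zero]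
end

section
/- Let M be real symmetric with spectral decomposition Σ_j θ_j E_j and let v be a unit vector with eigenvalue support S = {j : E_j v ≠ 0}. Suppose w is a unit vector with E_j v = σ_j E_j w for signs σ_j ∈ {1, −1} for all j ∈ S, and suppose there exist a real δ and a real time τ such that |τ θ_j − (δ + ζ_j π)| < ε (mod 2π) for all j ∈ S, where σ_j = (−1)^{ζ_j}. Then |⟨w, e^{iτM} v⟩| > 1 − C·ε for a constant C depending only on |S|; in particular, if such τ exists for every ε > 0, then v and w admit pretty good state transfer. -/
/-!
Write `q_j = ‖E_j v‖²`. Since the `E_j` are orthogonal projections summing to the identity, the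
`q_j` are convex weights supported on `S`, and the sign condition gives `⟨w, E_j v⟩ = σ_j q_j`.
Hence `⟨w, e^{iτM} v⟩ = ∑_{j ∈ S} q_j e^{iτθ_j} σ_j` is a convex combination of points that lie
within `ε` of `e^{iδ}` on the unit circle, so it lies in the `ε`-ball around `e^{iδ}`, and its
modulus exceeds `1 - ε`.
-/

open Matrix Finset Complex
open scoped Real ComplexOrder

lemma norm_exp_I_mul_sub_exp_I_mul_le (φ ψ : ℝ) (k : ℤ) :
    ‖exp (I * φ) - exp (I * ψ)‖ ≤ |φ - ψ - 2 * π * k| := by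
  set x := φ - ψ - 2 * π * k
  have hφ : exp (I * φ) = exp (I * ψ) * exp (I * x) := by
    rw [← exp_add, show (φ : ℂ) = x + ψ + k * (2 * π) by push_cast [x]; ring, mul_add,
      mul_add, exp_add, show I * (k * (2 * π)) = k * (2 * π * I) by ring,
      exp_int_mul_two_pi_mul_I, mul_one, add_comm]
  rw [hφ, ← mul_sub_one, norm_mul, norm_exp_I_mul_ofReal, one_mul, ← Real.norm_eq_abs]
  exact Real.norm_exp_I_mul_ofReal_sub_one_le

lemma norm_exp_I_mul_mul_neg_one_pow_sub_lt {φ δ ε : ℝ} {ζ : ℕ} {k : ℤ}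
    (h : |φ - (δ + ζ * π) - 2 * π * k| < ε) :
    ‖exp (I * φ) * (-1) ^ ζ - exp (I * δ)‖ < ε := by
  have hphase : exp (I * ↑(δ + ζ * π)) = exp (I * δ) * (-1) ^ ζ := by
    rw [← exp_pi_mul_I, ← exp_nat_mul, ← exp_add]
    push_cast
    ring_nf
  have hsq : ((-1 : ℂ) ^ ζ) * (-1) ^ ζ = 1 := by rw [← mul_pow]; norm_num
  have hrw : exp (I * φ) * (-1) ^ ζ - exp (I * δ) =
      (exp (I * φ) - exp (I * ↑(δ + ζ * π))) * (-1) ^ ζ := by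
    rw [hphase, sub_mul, mul_assoc, hsq, mul_one]
  rw [hrw, norm_mul, norm_pow, norm_neg, norm_one, one_pow, mul_one]
  exact (norm_exp_I_mul_sub_exp_I_mul_le _ _ k).trans_lt h

lemma one_sub_lt_norm_sum_smul {ι E : Type*} [SeminormedAddCommGroup E] [NormedSpace ℝ E]
    {S : Finset ι} {q : ι → ℝ} (hq₀ : ∀ j ∈ S, 0 ≤ q j) (hq₁ : ∑ j ∈ S, q j = 1)
    {z : ι → E} {c : E} (hc : ‖c‖ = 1) {ε : ℝ} (hz : ∀ j ∈ S, ‖z j - c‖ < ε) :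
    1 - ε < ‖∑ j ∈ S, q j • z j‖ := by
  have hball : ∑ j ∈ S, q j • z j ∈ Metric.ball c ε :=
    (convex_ball c ε).sum_mem hq₀ hq₁ fun j hj => mem_ball_iff_norm.2 (hz j hj)
  have := norm_sub_norm_le c (∑ j ∈ S, q j • z j)
  rw [norm_sub_rev] at this
  linarith [mem_ball_iff_norm.1 hball]

namespace Matrix

variable {m : Type*}

lemma isHermitian_of_im_eq_zero_of_transpose_eq_s18 {A : Matrix m m ℂ}
    (hreal : ∀ k l, (A k l).im = 0) (hsymm : Aᵀ = A) : A.IsHermitian := by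
  ext k l
  rw [conjTranspose_apply, ← transpose_apply A l k, hsymm]
  exact conj_eq_iff_im.2 (hreal l k)

variable [Fintype m] {R : Type*} [CommRing R] [StarRing R] {P : Matrix m m R}

lemma IsHermitian.star_dotProduct_mulVec_of_mul_self (hP : P.IsHermitian) (hidem : P * P = P)
    (a b : m → R) : star a ⬝ᵥ (P *ᵥ b) = star (P *ᵥ a) ⬝ᵥ (P *ᵥ b) := by
  rw [star_mulVec, hP.eq, ← dotProduct_mulVec, mulVec_mulVec, hidem]

lemma sum_star_mulVec_dotProduct_mulVec [DecidableEq m] {ι : Type*} [Fintype ι]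
    {E : ι → Matrix m m R}
    (hE : ∀ j, (E j).IsHermitian) (hidem : ∀ j, E j * E j = E j) (hsum : ∑ j, E j = 1)
    (v : m → R) : ∑ j, star (E j *ᵥ v) ⬝ᵥ (E j *ᵥ v) = star v ⬝ᵥ v := by
  simp_rw [← (hE _).star_dotProduct_mulVec_of_mul_self (hidem _), ← dotProduct_sum, ← sum_mulVec,
    hsum, one_mulVec]

lemma IsHermitian.star_dotProduct_mulVec_of_mulVec_eq_neg_one_pow_smul (hP : P.IsHermitian)
    (hidem : P * P = P) {v w : m → R} {k : ℕ} (hvw : P *ᵥ v = (-1 : R) ^ k • P *ᵥ w) :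
    star w ⬝ᵥ (P *ᵥ v) = (-1) ^ k * (star (P *ᵥ v) ⬝ᵥ (P *ᵥ v)) := by
  have hwv : P *ᵥ w = (-1 : R) ^ k • P *ᵥ v := by
    rw [hvw, smul_smul, ← mul_pow, neg_one_mul, neg_neg, one_pow, one_smul]
  rw [hP.star_dotProduct_mulVec_of_mul_self hidem, hwv, star_smul, smul_dotProduct, star_pow,
    star_neg, star_one, smul_eq_mul]

end Matrix

section SpectralWeight

variable {m ι : Type*} [Fintype m]

def spectralWeight (E : ι → Matrix m m ℂ) (v : m → ℂ) (j : ι) : ℝ :=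
  (star (E j *ᵥ v) ⬝ᵥ (E j *ᵥ v)).re

lemma ofReal_spectralWeight (E : ι → Matrix m m ℂ) (v : m → ℂ) (j : ι) :
    (spectralWeight E v j : ℂ) = star (E j *ᵥ v) ⬝ᵥ (E j *ᵥ v) :=
  (eq_re_of_ofReal_le (dotProduct_star_self_nonneg _)).symm

lemma spectralWeight_nonneg (E : ι → Matrix m m ℂ) (v : m → ℂ) (j : ι) :
    0 ≤ spectralWeight E v j :=
  (nonneg_iff.1 (dotProduct_star_self_nonneg _)).1

variable [Fintype ι] {E : ι → Matrix m m ℂ} {v : m → ℂ} {S : Finset ι}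

lemma sum_spectralWeight_eq_one [DecidableEq m] (hE : ∀ j, (E j).IsHermitian)
    (hidem : ∀ j, E j * E j = E j) (hsum : ∑ j, E j = 1) (hv : star v ⬝ᵥ v = 1)
    (hS : ∀ j ∉ S, E j *ᵥ v = 0) : ∑ j ∈ S, spectralWeight E v j = 1 := by
  rw [sum_subset (subset_univ S) fun j _ hj => by simp [spectralWeight, hS j hj]]
  have hsum_ofReal : ((∑ j, spectralWeight E v j : ℝ) : ℂ) = 1 := by
    rw [ofReal_sum]
    simp_rw [ofReal_spectralWeight, sum_star_mulVec_dotProduct_mulVec hE hidem hsum, hv]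
  exact_mod_cast hsum_ofReal

lemma star_dotProduct_sum_smul_mulVec (hE : ∀ j, (E j).IsHermitian)
    (hidem : ∀ j, E j * E j = E j) (hS : ∀ j ∉ S, E j *ᵥ v = 0) {w : m → ℂ} {ζ : ι → ℕ}
    (hsign : ∀ j ∈ S, E j *ᵥ v = (-1 : ℂ) ^ ζ j • E j *ᵥ w) (c : ι → ℂ) :
    star w ⬝ᵥ ((∑ j, c j • E j) *ᵥ v) = ∑ j ∈ S, spectralWeight E v j • (c j * (-1) ^ ζ j) := by
  rw [sum_mulVec, dotProduct_sum, ← sum_subset (subset_univ S) fun j _ hj => by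
    rw [smul_mulVec, hS j hj, smul_zero, dotProduct_zero]]
  refine sum_congr rfl fun j hj => ?_
  rw [smul_mulVec, dotProduct_smul,
    (hE j).star_dotProduct_mulVec_of_mulVec_eq_neg_one_pow_smul (hidem j) (hsign j hj),
    ← ofReal_spectralWeight, real_smul, smul_eq_mul]
  ring

end SpectralWeight

theorem stmt18_general {n d : ℕ}
    (θ : Fin d → ℝ)
    (E : Fin d → Matrix (Fin n) (Fin n) ℂ)
    (hreal : ∀ j k l, (E j k l).im = 0)
    (hsymm : ∀ j, (E j)ᵀ = E j)
    (hidem : ∀ j, E j * E j = E j)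
    (hsum : ∑ j, E j = 1)
    (v w : Fin n → ℂ)
    (hv : star v ⬝ᵥ v = 1)
    (S : Finset (Fin d)) (hS : ∀ j, j ∈ S ↔ (E j) *ᵥ v ≠ 0)
    (ζ : Fin d → ℕ)
    (hsign : ∀ j ∈ S, (E j) *ᵥ v = ((-1 : ℂ) ^ (ζ j)) • ((E j) *ᵥ w)) :
    (∃ C > (0 : ℝ), ∀ ε > (0 : ℝ), ∀ τ δ : ℝ,
      (∀ j ∈ S, ∃ k : ℤ, |τ * θ j - (δ + (ζ j : ℝ) * Real.pi) - 2 * Real.pi * k| < ε) →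
      ‖star w ⬝ᵥ ((∑ j, Complex.exp (Complex.I * ((τ * θ j : ℝ) : ℂ)) • E j) *ᵥ v)‖ >
        1 - C * ε) ∧
    ((∀ ε > (0 : ℝ), ∃ τ δ : ℝ,
        ∀ j ∈ S, ∃ k : ℤ, |τ * θ j - (δ + (ζ j : ℝ) * Real.pi) - 2 * Real.pi * k| < ε) →
      ∀ ε > (0 : ℝ), ∃ t : ℝ,
        ‖star w ⬝ᵥ ((∑ j, Complex.exp (Complex.I * ((t * θ j : ℝ) : ℂ)) • E j) *ᵥ v)‖ >
          1 - ε) := by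
  have hE : ∀ j, (E j).IsHermitian := fun j =>
    isHermitian_of_im_eq_zero_of_transpose_eq_s18 (hreal j) (hsymm j)
  have hEv : ∀ j ∉ S, E j *ᵥ v = 0 := fun j hj => not_not.1 (mt (hS j).2 hj)
  have hbound : ∀ ε τ δ : ℝ,
      (∀ j ∈ S, ∃ k : ℤ, |τ * θ j - (δ + (ζ j : ℝ) * π) - 2 * π * k| < ε) →
      1 - ε < ‖star w ⬝ᵥ ((∑ j, exp (I * ((τ * θ j : ℝ) : ℂ)) • E j) *ᵥ v)‖ := by
    intro ε τ δ h
    rw [star_dotProduct_sum_smul_mulVec hE hidem hEv hsign]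
    exact one_sub_lt_norm_sum_smul (fun j _ => spectralWeight_nonneg E v j)
      (sum_spectralWeight_eq_one hE hidem hsum hv hEv) (norm_exp_I_mul_ofReal δ) fun j hj =>
      (h j hj).elim fun _ hk => norm_exp_I_mul_mul_neg_one_pow_sub_lt hk
  refine ⟨⟨1, one_pos, fun ε _ τ δ h => by simpa using hbound ε τ δ h⟩, fun H ε hε => ?_⟩
  obtain ⟨τ, δ, h⟩ := H ε hε
  exact ⟨τ, hbound ε τ δ h⟩

/-- If `E_j v = (−1)^{ζ_j} E_j w` on the eigenvalue support `S` of `v`, and the phases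
`τθ_j` approximate `δ + ζ_j π (mod 2π)` within `ε` on `S`, then
`|⟨w, e^{iτM} v⟩| > 1 − Cε` for a constant `C`; in particular if such `τ` exists for every
`ε > 0` then there is pretty good state transfer from `v` to `w`. -/
theorem stmt18 {n d : ℕ}
    (θ : Fin d → ℝ) (hθ : Function.Injective θ)
    (E : Fin d → Matrix (Fin n) (Fin n) ℂ)
    (hreal : ∀ j k l, (E j k l).im = 0)
    (hsymm : ∀ j, (E j)ᵀ = E j)
    (hidem : ∀ j, E j * E j = E j)
    (horth : ∀ j k, j ≠ k → E j * E k = 0)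
    (hsum : ∑ j, E j = 1)
    (M : Matrix (Fin n) (Fin n) ℂ)
    (hM : M = ∑ j, (θ j : ℂ) • E j)
    (v w : Fin n → ℂ)
    (hv : star v ⬝ᵥ v = 1) (hw : star w ⬝ᵥ w = 1)
    (S : Finset (Fin d)) (hS : ∀ j, j ∈ S ↔ (E j) *ᵥ v ≠ 0)
    (ζ : Fin d → ℕ) (hζ : ∀ j, ζ j = 0 ∨ ζ j = 1)
    (hsign : ∀ j ∈ S, (E j) *ᵥ v = ((-1 : ℂ) ^ (ζ j)) • ((E j) *ᵥ w)) :
    (∃ C > (0 : ℝ), ∀ ε > (0 : ℝ), ∀ τ δ : ℝ,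
      (∀ j ∈ S, ∃ k : ℤ, |τ * θ j - (δ + (ζ j : ℝ) * Real.pi) - 2 * Real.pi * k| < ε) →
      ‖star w ⬝ᵥ ((∑ j, Complex.exp (Complex.I * ((τ * θ j : ℝ) : ℂ)) • E j) *ᵥ v)‖ >
        1 - C * ε) ∧
    ((∀ ε > (0 : ℝ), ∃ τ δ : ℝ,
        ∀ j ∈ S, ∃ k : ℤ, |τ * θ j - (δ + (ζ j : ℝ) * Real.pi) - 2 * Real.pi * k| < ε) →
      ∀ ε > (0 : ℝ), ∃ t : ℝ,
        ‖star w ⬝ᵥ ((∑ j, Complex.exp (Complex.I * ((t * θ j : ℝ) : ℂ)) • E j) *ᵥ v)‖ >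
          1 - ε) :=
  stmt18_general θ E hreal hsymm hidem hsum v w hv S hS ζ hsign
end
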